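/- arXiv:1011.6127 — 6 statements merged into one kernel-verified Lean document; each statement's English description precedes it below -/
import Mathlib

section
/- S is positively D-invariant for the system ṡ(t) = F(q(t)) s(t) + E(q(t)) δ(t) if and only if there exists τ > 0 such that for every vertex vᵢ ∈ {v₁,…,v_μ} of S, every vertex w_j ∈ {w₁,…,w_ν} of Q, and every vertex r_k ∈ {r₁,…,r_η} of D, one has vᵢ + τ·(F(w_j) vᵢ + E(w_j) r_k) ∈ S. -/
/-!
Necessity: the solution with constant parameter `w j` and input `r k` starting at `v i` stays in
`S`, so its initial velocity lies in the tangent cone of `S` at `v i`. For a polytope that cone is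
the cone generated by the `v m - v i`; it is closed (Carathéodory's theorem for cones), so a short
step along the velocity stays in `S`, and finitely many vertex triples allow a common step.

Sufficiency: the Euler step is affine separately in the state, the parameter and the input, so the
vertex condition extends to all of `S × Q × D`. Comparing `s` with the Euler step from a nearest
point of `S` shows that the distance from `s t` to `S` has right Dini derivative at most `K` times
itself, `K` a Lipschitz bound of `F(q)` on `Q`; by Grönwall's inequality it stays zero.
-/

open Set Matrix

/-- The affine matrix function `F(q) = F₀ + ∑ l, q_l F_l`. -/
noncomputable def matF {n p : ℕ} (F0 : Matrix (Fin n) (Fin n) ℝ)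
    (F : Fin p → Matrix (Fin n) (Fin n) ℝ) (q : Fin p → ℝ) : Matrix (Fin n) (Fin n) ℝ :=
  F0 + ∑ l, q l • F l

/-- The affine matrix function `E(q) = E₀ + ∑ l, q_l E_l`. -/
noncomputable def matE {n l p : ℕ} (E0 : Matrix (Fin n) (Fin l) ℝ)
    (E : Fin p → Matrix (Fin n) (Fin l) ℝ) (q : Fin p → ℝ) : Matrix (Fin n) (Fin l) ℝ :=
  E0 + ∑ i, q i • E i

/-- `S` is positively `D`-invariant for the system `ṡ(t) = F(q(t)) s(t) + E(q(t)) δ(t)`. -/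
def PosDInvariant {n l p : ℕ} (F0 : Matrix (Fin n) (Fin n) ℝ)
    (F : Fin p → Matrix (Fin n) (Fin n) ℝ)
    (E0 : Matrix (Fin n) (Fin l) ℝ) (E : Fin p → Matrix (Fin n) (Fin l) ℝ)
    (S : Set (Fin n → ℝ)) (Q : Set (Fin p → ℝ)) (D : Set (Fin l → ℝ)) : Prop :=
  ∀ q : ℝ → Fin p → ℝ, ContinuousOn q (Ici 0) → (∀ t ∈ Ici (0 : ℝ), q t ∈ Q) →
  ∀ δ : ℝ → Fin l → ℝ, ContinuousOn δ (Ici 0) → (∀ t ∈ Ici (0 : ℝ), δ t ∈ D) →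
  ∀ s : ℝ → Fin n → ℝ,
    (∀ t ∈ Ici (0 : ℝ),
      HasDerivAt s ((matF F0 F (q t)).mulVec (s t) + (matE E0 E (q t)).mulVec (δ t)) t) →
    s 0 ∈ S → ∀ t ∈ Ici (0 : ℝ), s t ∈ S

open Filter Topology Metric NormedSpace
open scoped NNReal

section FiniteCone
variable {ι E : Type*} [AddCommGroup E] [Module ℝ E]

lemma PointedCone.mem_hull_range_iff [Fintype ι] {u : ι → E} {y : E} :
    y ∈ PointedCone.hull ℝ (range u) ↔ ∃ c : ι → ℝ, 0 ≤ c ∧ ∑ i, c i • u i = y := by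
  constructor
  · intro hy
    obtain ⟨c, rfl⟩ := (Submodule.mem_span_range_iff_exists_fun ℝ≥0).1 hy
    exact ⟨fun i => c i, fun i => (c i).2, rfl⟩
  · rintro ⟨c, hc, rfl⟩
    exact Submodule.sum_mem _ fun i _ => smul_mem _ (hc i) (subset_hull (mem_range_self i))

lemma exists_sum_erase_eq_of_sum_smul_eq_zero [DecidableEq ι] {u : ι → E} {t : Finset ι}
    {c g : ι → ℝ} (hc : ∀ i ∈ t, 0 ≤ c i) (hg : ∑ i ∈ t, g i • u i = 0)
    (hpos : ∃ i ∈ t, 0 < g i) :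
    ∃ i₀ ∈ t, ∃ c' : ι → ℝ, (∀ i ∈ t.erase i₀, 0 ≤ c' i) ∧
      ∑ i ∈ t.erase i₀, c' i • u i = ∑ i ∈ t, c i • u i := by
  obtain ⟨i₀, hi₀, hmin⟩ := Finset.exists_min_image (t.filter (0 < g ·)) (fun i => c i / g i)
    (by simpa [Finset.Nonempty] using hpos)
  rw [Finset.mem_filter] at hi₀
  -- move along the relation `g` until the first coefficient, the one at `i₀`, vanishes
  set θ := c i₀ / g i₀
  have hθ : 0 ≤ θ := div_nonneg (hc i₀ hi₀.1) hi₀.2.le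
  have hc' : ∀ i ∈ t, 0 ≤ c i - θ * g i := by
    intro i hi
    rcases le_or_gt (g i) 0 with hgi | hgi
    · nlinarith [hc i hi]
    · have := hmin i (Finset.mem_filter.2 ⟨hi, hgi⟩)
      rw [le_div_iff₀ hgi] at this
      linarith
  refine ⟨i₀, hi₀.1, fun i => c i - θ * g i, fun i hi => hc' i (Finset.mem_of_mem_erase hi), ?_⟩
  rw [Finset.sum_erase _ (by simp [θ, div_mul_cancel₀ _ hi₀.2.ne'])]
  simp only [sub_smul, Finset.sum_sub_distrib, mul_smul, ← Finset.smul_sum, hg, smul_zero,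
    sub_zero]

theorem exists_linearIndepOn_sum_smul_eq (u : ι → E) (t : Finset ι) (c : ι → ℝ)
    (hc : ∀ i ∈ t, 0 ≤ c i) :
    ∃ t' : Finset ι, ∃ c' : ι → ℝ, LinearIndepOn ℝ u (t' : Set ι) ∧ (∀ i ∈ t', 0 ≤ c' i) ∧
      ∑ i ∈ t', c' i • u i = ∑ i ∈ t, c i • u i := by
  classical
  induction t using Finset.strongInduction generalizing c with
  | H t ih =>
  by_cases hli : LinearIndepOn ℝ u (t : Set ι)
  · exact ⟨t, c, hli, hc, rfl⟩
  obtain ⟨g, hg, i, hi, hgi⟩ := not_linearIndepOn_finset_iff.1 hli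
  obtain ⟨i₀, hi₀, c', hc', hsum⟩ : ∃ i₀ ∈ t, ∃ c' : ι → ℝ, (∀ i ∈ t.erase i₀, 0 ≤ c' i) ∧
      ∑ i ∈ t.erase i₀, c' i • u i = ∑ i ∈ t, c i • u i := by
    rcases hgi.lt_or_gt with hneg | hpos
    · exact exists_sum_erase_eq_of_sum_smul_eq_zero (g := -g) hc
        (by simp [neg_smul, Finset.sum_neg_distrib, hg]) ⟨i, hi, by simpa using hneg⟩
    · exact exists_sum_erase_eq_of_sum_smul_eq_zero hc hg ⟨i, hi, hpos⟩
  obtain ⟨t', c'', hli', hc'', hsum'⟩ := ih _ (Finset.erase_ssubset hi₀) c' hc'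
  exact ⟨t', c'', hli', hc'', hsum'.trans hsum⟩

theorem PointedCone.isClosed_hull_range {E : Type*} [NormedAddCommGroup E] [NormedSpace ℝ E]
    [FiniteDimensional ℝ E] [Fintype ι] (u : ι → E) :
    IsClosed (PointedCone.hull ℝ (range u) : Set E) := by
  classical
  have hcover : (PointedCone.hull ℝ (range u) : Set E) =
      ⋃ t : {t : Finset ι // LinearIndepOn ℝ u (t : Set ι)},
        Fintype.linearCombination ℝ (fun i : t.1 => u i) '' Ici 0 := by
    ext y
    simp only [SetLike.mem_coe, mem_iUnion, mem_image, Fintype.linearCombination_apply]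
    constructor
    · intro hy
      obtain ⟨c, hc, rfl⟩ := mem_hull_range_iff.1 hy
      obtain ⟨t, c', hli, hc', hsum⟩ :=
        exists_linearIndepOn_sum_smul_eq u Finset.univ c fun i _ => hc i
      refine ⟨⟨t, hli⟩, fun i => c' i, fun i => hc' i i.2, ?_⟩
      rw [Finset.sum_coe_sort t (fun i => c' i • u i), hsum]
    · rintro ⟨t, c, hc, rfl⟩
      exact Submodule.sum_mem _ fun i _ => smul_mem _ (hc i) (subset_hull (mem_range_self _))
  rw [hcover]
  refine isClosed_iUnion_of_finite fun t => ?_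
  have hinj := linearIndependent_iff_injective_fintypeLinearCombination.1 t.2
  exact (LinearMap.isClosedEmbedding_of_injective (LinearMap.ker_eq_bot.2 hinj)).isClosedMap _
    isClosed_Ici

end FiniteCone

section Polytope
variable {ι E : Type*} [AddCommGroup E] [Module ℝ E]

lemma Convex.eventually_nhdsGT_add_smul_mem {S : Set E} (hS : Convex ℝ S) {x d : E} {ε : ℝ}
    (hε : 0 < ε) (hx : x ∈ S) (hxd : x + ε • d ∈ S) : ∀ᶠ h in 𝓝[>] (0 : ℝ), x + h • d ∈ S := by
  filter_upwards [Ioc_mem_nhdsGT hε] with h ⟨hh0, hhε⟩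
  have := hS.add_smul_mem hx hxd ⟨div_nonneg hh0.le hε.le, (div_le_one hε).2 hhε⟩
  rwa [smul_smul, div_mul_cancel₀ _ hε.ne'] at this

lemma sub_mem_hull_of_mem_convexHull {v : ι → E} (x : E) {y : E}
    (hy : y ∈ convexHull ℝ (range v)) : y - x ∈ PointedCone.hull ℝ (range fun i => v i - x) := by
  have hconv : Convex ℝ ((· - x) ⁻¹' (PointedCone.hull ℝ (range fun i => v i - x) : Set E)) := by
    simpa only [neg_add_eq_sub] using (PointedCone.convex _).translate_preimage_right (-x)
  refine convexHull_min (range_subset_iff.2 fun i => ?_) hconv hy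
  exact PointedCone.subset_hull (mem_range_self i)

lemma exists_add_smul_mem_convexHull_of_mem_hull [Fintype ι] {v : ι → E} {x d : E}
    (hx : x ∈ convexHull ℝ (range v)) (hd : d ∈ PointedCone.hull ℝ (range fun i => v i - x)) :
    ∃ ε : ℝ, 0 < ε ∧ x + ε • d ∈ convexHull ℝ (range v) := by
  obtain ⟨c, hc, rfl⟩ := PointedCone.mem_hull_range_iff.1 hd
  set M := ∑ i, c i
  rcases (Finset.sum_nonneg fun i _ => hc i : 0 ≤ M).eq_or_lt with hM | hM
  · have hc0 : ∀ i, c i = 0 := fun i =>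
      (Finset.sum_eq_zero_iff_of_nonneg fun i _ => hc i).1 hM.symm i (Finset.mem_univ i)
    refine ⟨1, one_pos, ?_⟩
    simpa only [hc0, zero_smul, Finset.sum_const_zero, smul_zero, add_zero] using hx
  -- `x + M⁻¹ • d` is the convex combination of the `v i` with weights `c i / M`
  refine ⟨M⁻¹, inv_pos.2 hM, mem_convexHull_of_exists_fintype (fun i => c i / M) v
    (fun i => div_nonneg (hc i) hM.le) ?_ (fun i => mem_range_self i) ?_⟩
  · rw [← Finset.sum_div, div_self hM.ne']
  · simp only [smul_sub, Finset.sum_sub_distrib, Finset.smul_sum, smul_smul, div_eq_inv_mul]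
    rw [← Finset.sum_smul, ← Finset.mul_sum, inv_mul_cancel₀ hM.ne', one_smul]
    abel

theorem eventually_add_smul_mem_convexHull {E : Type*} [NormedAddCommGroup E] [NormedSpace ℝ E]
    [FiniteDimensional ℝ E] [Fintype ι] {v : ι → E} {s : ℝ → E} {d : E}
    (hs : ∀ t ≥ 0, s t ∈ convexHull ℝ (range v)) (hd : HasDerivWithinAt s d (Ioi 0) 0) :
    ∀ᶠ h in 𝓝[>] (0 : ℝ), s 0 + h • d ∈ convexHull ℝ (range v) := by
  set C := PointedCone.hull ℝ (range fun i => v i - s 0)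
  have hslope : ∀ t ∈ Ioi (0 : ℝ), slope s 0 t ∈ C := by
    intro t ht
    rw [slope_def_module, sub_zero]
    exact C.smul_mem (inv_nonneg.2 (le_of_lt ht))
      (sub_mem_hull_of_mem_convexHull _ (hs t (le_of_lt ht)))
  have hlim : Tendsto (slope s 0) (𝓝[>] 0) (𝓝 d) :=
    (hasDerivWithinAt_iff_tendsto_slope' (lt_irrefl 0)).1 hd
  have hdC : d ∈ C := (PointedCone.isClosed_hull_range _).mem_of_tendsto hlim
    (eventually_mem_nhdsWithin.mono hslope)
  obtain ⟨ε, hε, hmem⟩ := exists_add_smul_mem_convexHull_of_mem_hull (hs 0 le_rfl) hdC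
  exact (convex_convexHull ℝ _).eventually_nhdsGT_add_smul_mem hε (hs 0 le_rfl) hmem

end Polytope

section ODE
variable {E : Type*} [NormedAddCommGroup E] [NormedSpace ℝ E]

theorem exists_hasDerivAt_eq_clm_apply_add [CompleteSpace E] (A : E →L[ℝ] E) (e x₀ : E) :
    ∃ s : ℝ → E, s 0 = x₀ ∧ ∀ t, HasDerivAt s (A (s t) + e) t := by
  -- integrating `exp (u • A)` applied to the initial velocity avoids inverting `A`
  set d := A x₀ + e with hd
  have hΦ : ∀ u : ℝ, HasDerivAt (fun u : ℝ => exp (u • A) d) (A (exp (u • A) d)) u := fun u =>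
    by simpa using (hasDerivAt_exp_smul_const' A u).clm_apply (hasDerivAt_const u d)
  have hcont : Continuous fun u : ℝ => exp (u • A) d :=
    continuous_iff_continuousAt.2 fun u => (hΦ u).continuousAt
  refine ⟨fun t => x₀ + ∫ u in (0 : ℝ)..t, exp (u • A) d, by simp, fun t => ?_⟩
  have hA : A (∫ u in (0 : ℝ)..t, exp (u • A) d) = exp (t • A) d - d := by
    rw [← A.intervalIntegral_comp_comm (hcont.intervalIntegrable _ _),
      intervalIntegral.integral_eq_sub_of_hasDerivAt (fun u _ => hΦ u)
        ((A.continuous.comp hcont).intervalIntegrable _ _)]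
    simp
  convert (hcont.integral_hasStrictDerivAt 0 t).hasDerivAt.const_add x₀ using 1
  rw [map_add, hA, hd]
  abel

lemma infDist_le_of_add_smul_mem {S : Set E} {a b v w y : E} {h : ℝ} (hh : 0 ≤ h)
    (hy : y + h • w ∈ S) :
    infDist b S ≤ ‖b - a - h • v‖ + ‖a - y‖ + h * ‖v - w‖ := by
  calc infDist b S ≤ ‖(b - a - h • v) + (a - y) + h • (v - w)‖ := by
        convert infDist_le_dist_of_mem hy using 1
        rw [dist_eq_norm]
        congr 1
        module
    _ ≤ ‖b - a - h • v‖ + ‖a - y‖ + h * ‖v - w‖ := by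
        grw [norm_add₃_le, norm_smul, Real.norm_of_nonneg hh]

lemma frequently_slope_infDist_lt {S : Set E} (hS : IsCompact S) (hne : S.Nonempty)
    {F : E → E} {K : ℝ≥0} (hF : LipschitzWith K F)
    (hstep : ∀ y ∈ S, ∃ᶠ h in 𝓝[>] (0 : ℝ), y + h • F y ∈ S)
    {s : ℝ → E} {t : ℝ} (hs : HasDerivAt s (F (s t)) t) {r : ℝ} (hr : K * infDist (s t) S < r) :
    ∃ᶠ z in 𝓝[>] t, (z - t)⁻¹ * (infDist (s z) S - infDist (s t) S) < r := by
  -- compare `s z` with the Euler step from a point `y ∈ S` nearest to `s t`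
  obtain ⟨y, hyS, hy⟩ := hS.exists_infDist_eq_dist hne (s t)
  have hsmall : ∀ᶠ z in 𝓝[>] t,
      ‖z - t‖⁻¹ * ‖s z - s t - (z - t) • F (s t)‖ < r - K * infDist (s t) S :=
    ((hasDerivAt_iff_tendsto.1 hs).mono_left nhdsWithin_le_nhds).eventually_lt_const
      (sub_pos.2 hr)
  have hfreq : ∃ᶠ z in 𝓝[>] t, y + (z - t) • F y ∈ S := by
    have hmap : map (t + ·) (𝓝[>] (0 : ℝ)) = 𝓝[>] t := by simp
    rw [← hmap, frequently_map]
    simpa only [add_sub_cancel_left] using hstep y hyS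
  refine (hfreq.and_eventually (hsmall.and self_mem_nhdsWithin)).mono ?_
  rintro z ⟨hz, hsm, htz⟩
  have hzt : 0 < z - t := sub_pos.2 htz
  have hyn : ‖s t - y‖ = infDist (s t) S := by rw [hy, dist_eq_norm]
  have hlip : (z - t) * ‖F (s t) - F y‖ ≤ (z - t) * (K * infDist (s t) S) := by
    rw [← hyn, ← dist_eq_norm, ← dist_eq_norm]
    exact mul_le_mul_of_nonneg_left (hF.dist_le_mul _ _) hzt.le
  have hdist := infDist_le_of_add_smul_mem (a := s t) (b := s z) (v := F (s t)) hzt.le hz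
  rw [hyn] at hdist
  rw [Real.norm_of_nonneg hzt.le, inv_mul_lt_iff₀ hzt] at hsm
  rw [inv_mul_lt_iff₀ hzt]
  linarith

theorem mem_of_hasDerivAt_of_frequently_add_smul_mem {S : Set E} (hS : IsCompact S)
    {f : ℝ → E → E} {K : ℝ≥0} (hf : ∀ t ≥ 0, LipschitzWith K (f t))
    (hstep : ∀ t ≥ 0, ∀ y ∈ S, ∃ᶠ h in 𝓝[>] (0 : ℝ), y + h • f t y ∈ S)
    {s : ℝ → E} (hs : ∀ t ≥ 0, HasDerivAt s (f t (s t)) t) (hs0 : s 0 ∈ S) :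
    ∀ t ≥ 0, s t ∈ S := by
  intro T hT
  have hne : S.Nonempty := ⟨_, hs0⟩
  have hg : ∀ t ∈ Icc 0 T, infDist (s t) S ≤ gronwallBound 0 K 0 (t - 0) := by
    refine le_gronwallBound_of_liminf_deriv_right_le (f' := fun t => K * infDist (s t) S)
      (fun t ht => ((continuous_infDist_pt S).continuousAt.comp
        (hs t ht.1).continuousAt).continuousWithinAt)
      (fun t ht r hr => frequently_slope_infDist_lt hS hne (hf t ht.1) (hstep t ht.1)
        (hs t ht.1) hr)
      (infDist_zero_of_mem hs0).le (fun t _ => (add_zero _).ge)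
  have hT0 := hg T ⟨hT, le_rfl⟩
  rw [gronwallBound_ε0_δ0] at hT0
  exact (hS.isClosed.mem_iff_infDist_zero hne).2 (le_antisymm hT0 infDist_nonneg)

end ODE

lemma AffineMap.mem_of_mem_convexHull_range {ι E F : Type*} [AddCommGroup E] [Module ℝ E]
    [AddCommGroup F] [Module ℝ F] (f : E →ᵃ[ℝ] F) {S : Set F} (hS : Convex ℝ S) {v : ι → E}
    (hv : ∀ i, f (v i) ∈ S) {x : E} (hx : x ∈ convexHull ℝ (range v)) : f x ∈ S :=
  (convexHull_min (range_subset_iff.2 hv) (hS.affine_preimage f) :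
    convexHull ℝ (range v) ⊆ f ⁻¹' S) hx

section EulerStep
variable {n l p : ℕ} (F0 : Matrix (Fin n) (Fin n) ℝ) (F : Fin p → Matrix (Fin n) (Fin n) ℝ)
  (E0 : Matrix (Fin n) (Fin l) ℝ) (E : Fin p → Matrix (Fin n) (Fin l) ℝ)

lemma matF_add (a b : Fin p → ℝ) : matF F0 F (a + b) = matF F0 F b + ∑ i, a i • F i := by
  simp only [matF, Pi.add_apply, add_smul, Finset.sum_add_distrib]
  abel

lemma matE_add (a b : Fin p → ℝ) : matE E0 E (a + b) = matE E0 E b + ∑ i, a i • E i := by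
  simp only [matE, Pi.add_apply, add_smul, Finset.sum_add_distrib]
  abel

noncomputable def eulerStepAffineInState (τ : ℝ) (q : Fin p → ℝ) (δ : Fin l → ℝ) :
    (Fin n → ℝ) →ᵃ[ℝ] (Fin n → ℝ) where
  toFun x := x + τ • (matF F0 F q *ᵥ x + matE E0 E q *ᵥ δ)
  linear := LinearMap.id + τ • (matF F0 F q).mulVecLin
  map_vadd' a b := by
    simp only [vadd_eq_add, mulVec_add, LinearMap.add_apply, LinearMap.id_apply,
      LinearMap.smul_apply, mulVecLin_apply]
    module

noncomputable def eulerStepAffineInParam (τ : ℝ) (x : Fin n → ℝ) (δ : Fin l → ℝ) :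
    (Fin p → ℝ) →ᵃ[ℝ] (Fin n → ℝ) where
  toFun q := x + τ • (matF F0 F q *ᵥ x + matE E0 E q *ᵥ δ)
  linear := Fintype.linearCombination ℝ fun i => τ • (F i *ᵥ x + E i *ᵥ δ)
  map_vadd' a b := by
    simp only [vadd_eq_add, matF_add, matE_add, add_mulVec, sum_mulVec, smul_mulVec,
      Fintype.linearCombination_apply, smul_add, Finset.smul_sum, smul_comm τ]
    rw [Finset.sum_add_distrib]
    abel

noncomputable def eulerStepAffineInInput (τ : ℝ) (x : Fin n → ℝ) (q : Fin p → ℝ) :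
    (Fin l → ℝ) →ᵃ[ℝ] (Fin n → ℝ) where
  toFun δ := x + τ • (matF F0 F q *ᵥ x + matE E0 E q *ᵥ δ)
  linear := τ • (matE E0 E q).mulVecLin
  map_vadd' a b := by
    simp only [vadd_eq_add, mulVec_add, LinearMap.smul_apply, mulVecLin_apply]
    module

theorem add_smul_mem_of_forall_vertices {μ ν η : ℕ} {v : Fin μ → Fin n → ℝ}
    {w : Fin ν → Fin p → ℝ} {r : Fin η → Fin l → ℝ} {S : Set (Fin n → ℝ)} (hS : Convex ℝ S)
    {τ : ℝ} (hvert : ∀ i j k, v i + τ • (matF F0 F (w j) *ᵥ v i + matE E0 E (w j) *ᵥ r k) ∈ S)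
    {x : Fin n → ℝ} {q : Fin p → ℝ} {δ : Fin l → ℝ} (hx : x ∈ convexHull ℝ (range v))
    (hq : q ∈ convexHull ℝ (range w)) (hδ : δ ∈ convexHull ℝ (range r)) :
    x + τ • (matF F0 F q *ᵥ x + matE E0 E q *ᵥ δ) ∈ S := by
  have hr : ∀ i j, v i + τ • (matF F0 F (w j) *ᵥ v i + matE E0 E (w j) *ᵥ δ) ∈ S := fun i j =>
    (eulerStepAffineInInput F0 F E0 E τ (v i) (w j)).mem_of_mem_convexHull_range hS (hvert i j) hδ
  have hw : ∀ i, v i + τ • (matF F0 F q *ᵥ v i + matE E0 E q *ᵥ δ) ∈ S := fun i =>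
    (eulerStepAffineInParam F0 F E0 E τ (v i) δ).mem_of_mem_convexHull_range hS (hr i) hq
  exact (eulerStepAffineInState F0 F E0 E τ q δ).mem_of_mem_convexHull_range hS hw hx

lemma continuous_matF : Continuous (matF F0 F) := by
  unfold matF
  fun_prop

theorem exists_lipschitzWith_matF_mulVec {Q : Set (Fin p → ℝ)} (hQ : IsCompact Q) :
    ∃ K : ℝ≥0, ∀ q ∈ Q, LipschitzWith K fun x : Fin n → ℝ => matF F0 F q *ᵥ x := by
  let T : Matrix (Fin n) (Fin n) ℝ →ₗ[ℝ] (Fin n → ℝ) →L[ℝ] (Fin n → ℝ) :=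
    (Matrix.toLin'.trans LinearMap.toContinuousLinearMap).toLinearMap
  obtain ⟨C, hC⟩ := hQ.exists_bound_of_continuousOn
    (T.continuous_of_finiteDimensional.comp (continuous_matF F0 F)).continuousOn
  refine ⟨C.toNNReal, fun q hq => (T (matF F0 F q)).lipschitz.weaken ?_⟩
  rw [← NNReal.coe_le_coe, coe_nnnorm]
  exact (hC q hq).trans (Real.le_coe_toNNReal C)

end EulerStep

theorem posDInvariant_iff_euler_step_general {n l p μ ν η : ℕ}
    (F0 : Matrix (Fin n) (Fin n) ℝ) (F : Fin p → Matrix (Fin n) (Fin n) ℝ)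
    (E0 : Matrix (Fin n) (Fin l) ℝ) (E : Fin p → Matrix (Fin n) (Fin l) ℝ)
    (v : Fin μ → Fin n → ℝ) (w : Fin ν → Fin p → ℝ) (r : Fin η → Fin l → ℝ)
    (S : Set (Fin n → ℝ)) (Q : Set (Fin p → ℝ)) (D : Set (Fin l → ℝ))
    (hS : S = convexHull ℝ (Set.range v))
    (hQ : Q = convexHull ℝ (Set.range w))
    (hD : D = convexHull ℝ (Set.range r)) :
    PosDInvariant F0 F E0 E S Q D ↔
      ∃ τ : ℝ, 0 < τ ∧ ∀ (i : Fin μ) (j : Fin ν) (k : Fin η),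
        v i + τ • ((matF F0 F (w j)).mulVec (v i) + (matE E0 E (w j)).mulVec (r k)) ∈ S := by
  subst hS hQ hD
  constructor
  · intro hinv
    have hstep : ∀ i j k, ∀ᶠ h in 𝓝[>] (0 : ℝ),
        v i + h • (matF F0 F (w j) *ᵥ v i + matE E0 E (w j) *ᵥ r k) ∈ convexHull ℝ (range v) := by
      intro i j k
      obtain ⟨s, hs0, hs⟩ := exists_hasDerivAt_eq_clm_apply_add
        (Matrix.toLin' (matF F0 F (w j))).toContinuousLinearMap (matE E0 E (w j) *ᵥ r k) (v i)
      have hmem := hinv (fun _ => w j) continuousOn_const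
        (fun _ _ => subset_convexHull ℝ _ (mem_range_self j)) (fun _ => r k) continuousOn_const
        (fun _ _ => subset_convexHull ℝ _ (mem_range_self k)) s (fun t _ => by simpa using hs t)
        (hs0 ▸ subset_convexHull ℝ _ (mem_range_self i))
      simpa [hs0] using eventually_add_smul_mem_convexHull hmem (hs 0).hasDerivWithinAt
    obtain ⟨τ, hτ, hτpos⟩ := ((eventually_all.2 fun i => eventually_all.2 fun j =>
      eventually_all.2 (hstep i j)).and self_mem_nhdsWithin).exists
    exact ⟨τ, hτpos, hτ⟩
  · rintro ⟨τ, hτ, hvert⟩ q - hq δ - hδ s hs hs0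
    obtain ⟨K, hK⟩ := exists_lipschitzWith_matF_mulVec F0 F
      ((finite_range w).isCompact_convexHull (𝕜 := ℝ))
    refine mem_of_hasDerivAt_of_frequently_add_smul_mem
      ((finite_range v).isCompact_convexHull (𝕜 := ℝ)) (K := K)
      (f := fun t y => matF F0 F (q t) *ᵥ y + matE E0 E (q t) *ᵥ δ t)
      (fun t ht => LipschitzWith.of_dist_le_mul fun a b => ?_) (fun t ht y hy => ?_) hs hs0
    · rw [dist_add_right]
      exact (hK _ (hq t ht)).dist_le_mul a b
    · exact ((convex_convexHull ℝ _).eventually_nhdsGT_add_smul_mem hτ hy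
        (add_smul_mem_of_forall_vertices F0 F E0 E (convex_convexHull ℝ _) hvert hy (hq t ht)
          (hδ t ht))).frequently

/-- Corollary 2: `S` is positively `D`-invariant iff there exists `τ > 0` such that
the Euler step from every vertex of `S`, for every vertex of `Q` and `D`, stays in `S`. -/
theorem posDInvariant_iff_euler_step {n l p μ ν η : ℕ}
    (F0 : Matrix (Fin n) (Fin n) ℝ) (F : Fin p → Matrix (Fin n) (Fin n) ℝ)
    (E0 : Matrix (Fin n) (Fin l) ℝ) (E : Fin p → Matrix (Fin n) (Fin l) ℝ)
    (v : Fin μ → Fin n → ℝ) (w : Fin ν → Fin p → ℝ) (r : Fin η → Fin l → ℝ)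
    (S : Set (Fin n → ℝ)) (Q : Set (Fin p → ℝ)) (D : Set (Fin l → ℝ))
    (hS : S = convexHull ℝ (Set.range v))
    (hQ : Q = convexHull ℝ (Set.range w))
    (hD : D = convexHull ℝ (Set.range r))
    (hSint : (interior S).Nonempty) (hS0 : (0 : Fin n → ℝ) ∈ S) :
    PosDInvariant F0 F E0 E S Q D ↔
      ∃ τ : ℝ, 0 < τ ∧ ∀ (i : Fin μ) (j : Fin ν) (k : Fin η),
        v i + τ • ((matF F0 F (w j)).mulVec (v i) + (matE E0 E (w j)).mulVec (r k)) ∈ S :=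
  posDInvariant_iff_euler_step_general F0 F E0 E v w r S Q D hS hQ hD
end

section
/- Suppose in addition that S admits the half-space description S = {s ∈ ℝⁿ : g_h·s ≤ ξ_h for h = 1,…,H} with all ξ_h > 0, and for each vertex vᵢ of S let Cᵢ = {s ∈ ℝⁿ : g_h·s ≤ ξ_h for every h with g_h·vᵢ = ξ_h}. Then S is positively D-invariant for the system ṡ(t) = F(q(t)) s(t) + E(q(t)) δ(t) if and only if for every τ > 0, every vertex vᵢ ∈ {v₁,…,v_μ} of S, every vertex w_j ∈ {w₁,…,w_ν} of Q, and every vertex r_k ∈ {r₁,…,r_η} of D, one has vᵢ + τ·(F(w_j) vᵢ + E(w_j) r_k) ∈ Cᵢ. -/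
open Set Matrix Topology Filter

theorem exists_hasDerivAt_affine_ode {E : Type*} [NormedAddCommGroup E] [NormedSpace ℝ E]
    [CompleteSpace E] (A : E →L[ℝ] E) (b x₀ : E) :
    ∃ s : ℝ → E, s 0 = x₀ ∧ ∀ t, HasDerivAt s (A (s t) + b) t := by
  -- `(x, u)' = (A x + u • b, 0)` is linear, and `u ≡ 1` along the solution from `(x₀, 1)`
  let T : E × ℝ →L[ℝ] E × ℝ :=
    (A.comp (.fst ℝ E ℝ) + (ContinuousLinearMap.snd ℝ E ℝ).smulRight b).prod 0
  let z : ℝ → E × ℝ := fun t => NormedSpace.exp (t • T) (x₀, 1)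
  have hz : ∀ t, HasDerivAt z (T (z t)) t := fun t => by
    simpa [z, Function.comp_def] using (ContinuousLinearMap.apply ℝ _ (x₀, 1)).hasFDerivAt
      |>.comp_hasDerivAt t (hasDerivAt_exp_smul_const' T t)
  have hz₂ : ∀ t, HasDerivAt (fun t => (z t).2) 0 t := fun t => by
    simpa [T, Function.comp_def] using
      (ContinuousLinearMap.snd ℝ E ℝ).hasFDerivAt.comp_hasDerivAt t (hz t)
  have hz₂_one : ∀ t, (z t).2 = 1 := fun t => by
    simpa [z] using is_const_of_deriv_eq_zero (fun t => (hz₂ t).differentiableAt)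
      (fun t => (hz₂ t).deriv) t 0
  refine ⟨fun t => (z t).1, by simp [z], fun t => ?_⟩
  simpa [T, hz₂_one, Function.comp_def] using
    (ContinuousLinearMap.fst ℝ E ℝ).hasFDerivAt.comp_hasDerivAt t (hz t)

theorem HasDerivAt.nonpos_of_forall_le {φ : ℝ → ℝ} {φ' a : ℝ} (h : HasDerivAt φ φ' a)
    (hle : ∀ t ≥ a, φ t ≤ φ a) : φ' ≤ 0 := by
  have hmax : IsLocalMaxOn φ (Ici a) a := Filter.eventually_of_mem self_mem_nhdsWithin hle
  have hone : (1 : ℝ) ∈ posTangentConeAt (Ici a) a :=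
    mem_posTangentConeAt_of_segment_subset <| by
      rw [segment_eq_Icc (by linarith)]; exact Icc_subset_Ici_self
  simpa using hmax.hasFDerivWithinAt_nonpos h.hasFDerivAt.hasFDerivWithinAt hone

theorem HasDerivAt.const_dotProduct {m : Type*} [Fintype m] (a : m → ℝ) {s : ℝ → m → ℝ}
    {s' : m → ℝ} {x : ℝ} (h : HasDerivAt s s' x) :
    HasDerivAt (fun y => a ⬝ᵥ s y) (a ⬝ᵥ s') x := by
  simpa [Function.comp_def] using
    (LinearMap.toContinuousLinearMap (dotProductBilin ℝ ℝ a)).hasFDerivAt.comp_hasDerivAt x h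

theorem eventually_nhdsGT_neg_of_hasDerivAt {χ : ℝ → ℝ} {χ' x : ℝ} (h : HasDerivAt χ χ' x)
    (hx : χ x ≤ 0) (hx' : χ x = 0 → χ' < 0) : ∀ᶠ z in 𝓝[>] x, χ z < 0 := by
  rcases hx.lt_or_eq with hlt | heq
  · exact nhdsWithin_le_nhds (h.continuousAt.eventually_lt_const hlt)
  · have hslope : ∀ᶠ z in 𝓝[>] x, slope χ x z < 0 :=
      (hasDerivAt_iff_tendsto_slope.1 h).eventually_lt_const (hx' heq)
        |>.filter_mono (nhdsWithin_mono _ fun _ hz => ne_of_gt hz)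
    filter_upwards [hslope, self_mem_nhdsWithin] with z hz hxz
    rw [slope_def_field, div_lt_iff₀ (sub_pos.2 hxz), heq] at hz
    linarith

theorem eventually_slope_finset_sup'_lt {ι : Type*} [Fintype ι] [Nonempty ι]
    {ψ : ι → ℝ → ℝ} {ψ' : ι → ℝ} {x r : ℝ} (hψ : ∀ i, HasDerivAt (ψ i) (ψ' i) x)
    (hr : ∀ i, ψ i x = Finset.univ.sup' Finset.univ_nonempty (ψ · x) → ψ' i < r) :
    ∀ᶠ z in 𝓝[>] x, slope (fun y => Finset.univ.sup' Finset.univ_nonempty (ψ · y)) x z < r := by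
  set V := fun y => Finset.univ.sup' Finset.univ_nonempty (ψ · y)
  have hbelow : ∀ i, ∀ᶠ z in 𝓝[>] x, ψ i z - (V x + r * (z - x)) < 0 := fun i => by
    refine eventually_nhdsGT_neg_of_hasDerivAt (χ' := ψ' i - r * 1) ?_ ?_ fun h => ?_
    · exact (hψ i).sub ((hasDerivAt_id x).sub_const x |>.const_mul r |>.const_add (V x))
    · simpa using Finset.le_sup' (ψ · x) (Finset.mem_univ i)
    · linarith [hr i (by simpa [sub_eq_zero] using h)]
  filter_upwards [eventually_all.2 hbelow, self_mem_nhdsWithin] with z hz hxz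
  have hVz : V z < V x + r * (z - x) :=
    (Finset.sup'_lt_iff _).2 fun i _ => by linarith [hz i]
  rw [slope_def_field, div_lt_iff₀ (sub_pos.2 hxz)]
  linarith

theorem le_of_frequently_slope_right_lt {W : ℝ → ℝ} {a b c K : ℝ}
    (hW : ContinuousOn W (Icc a b)) (ha : W a ≤ c)
    (hslope : ∀ x ∈ Ico a b, ∀ r, K * (W x - c) < r → ∃ᶠ z in 𝓝[>] x, slope W x z < r) :
    ∀ x ∈ Icc a b, W x ≤ c := by
  have hbound : ∀ y, gronwallBound c K (-(K * c)) y = c := fun y => by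
    rcases eq_or_ne K 0 with rfl | hK
    · simp [gronwallBound_K0]
    · rw [gronwallBound_of_K_ne_0 hK]; field_simp; ring
  intro x hx
  simpa [hbound] using le_gronwallBound_of_liminf_deriv_right_le (f' := fun x => K * (W x - c))
    hW hslope ha (fun x _ => (by ring : K * (W x - c) = K * W x + -(K * c)).le) x hx

theorem dotProduct_le_of_mem_convexHull {m : Type*} [Fintype m] {s : Set (m → ℝ)}
    {a z : m → ℝ} {b : ℝ} (hs : ∀ x ∈ s, a ⬝ᵥ x ≤ b) (hz : z ∈ convexHull ℝ s) : a ⬝ᵥ z ≤ b :=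
  convexHull_min hs (convex_halfSpace_le (dotProductBilin ℝ ℝ a).isLinear b) hz

theorem dotProduct_le_of_mem_convexHull_face {m ι : Type*} [Fintype m] [Finite ι]
    {v : ι → m → ℝ} {g a z : m → ℝ} {ξ b : ℝ} (hv : ∀ i, g ⬝ᵥ v i ≤ ξ)
    (hface : ∀ i, g ⬝ᵥ v i = ξ → a ⬝ᵥ v i ≤ b) (hz : z ∈ convexHull ℝ (range v))
    (hgz : g ⬝ᵥ z = ξ) : a ⬝ᵥ z ≤ b := by
  -- a large multiple of the slack `ξ - g ⬝ᵥ x` dominates `a ⬝ᵥ x - b` at every vertex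
  obtain ⟨c, hc⟩ : ∃ c : ℝ, ∀ i, a ⬝ᵥ v i - b ≤ c * (ξ - g ⬝ᵥ v i) := by
    have hi : ∀ i, ∃ c : ℝ, ∀ μ ≥ c, a ⬝ᵥ v i - b ≤ μ * (ξ - g ⬝ᵥ v i) := fun i => by
      rcases (hv i).lt_or_eq with hlt | heq
      · exact ⟨(a ⬝ᵥ v i - b) / (ξ - g ⬝ᵥ v i), fun μ hμ => by
          rwa [← div_le_iff₀ (sub_pos.2 hlt)]⟩
      · exact ⟨0, fun μ _ => by simp [heq, hface i heq]⟩
    choose c hc using hi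
    obtain ⟨M, hM⟩ := Finite.exists_le c
    exact ⟨M, fun i => hc i M (hM i)⟩
  have := dotProduct_le_of_mem_convexHull (a := a + c • g) (b := b + c * ξ) (by
    rintro _ ⟨i, rfl⟩
    simp only [add_dotProduct, smul_dotProduct, smul_eq_mul]
    linarith [hc i]) hz
  simp only [add_dotProduct, smul_dotProduct, smul_eq_mul, hgz] at this
  linarith

theorem dotProduct_mulVec_add_le_of_face {m ι : Type*} [Fintype m] {g : ι → m → ℝ}
    {ξ : ι → ℝ} {M : Matrix m m ℝ} {e y : m → ℝ} {h : ι} {c : ℝ}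
    (hface : ∀ z, (∀ j, g j ⬝ᵥ z ≤ ξ j) → g h ⬝ᵥ z = ξ h → g h ⬝ᵥ (M *ᵥ z + e) ≤ 0)
    (hc : 1 ≤ c) (hy : ∀ j, g j ⬝ᵥ y ≤ c * ξ j) (hyh : g h ⬝ᵥ y = c * ξ h) :
    g h ⬝ᵥ (M *ᵥ y + e) ≤ (c - 1) * |g h ⬝ᵥ e| := by
  have hc₀ : 0 < c := by linarith
  have hz := hface (c⁻¹ • y) (fun j => by
      rw [dotProduct_smul, smul_eq_mul, inv_mul_le_iff₀ hc₀]; exact hy j)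
    (by rw [dotProduct_smul, smul_eq_mul, hyh, inv_mul_cancel_left₀ hc₀.ne'])
  calc g h ⬝ᵥ (M *ᵥ y + e)
      = c * g h ⬝ᵥ (M *ᵥ (c⁻¹ • y) + e) - (c - 1) * g h ⬝ᵥ e := by
        simp only [mulVec_smul, dotProduct_add, dotProduct_smul, smul_eq_mul]
        field_simp
        ring
    _ ≤ (c - 1) * |g h ⬝ᵥ e| := by nlinarith [neg_abs_le (g h ⬝ᵥ e)]

theorem add_smul_mem_activeCone_iff {m ι : Type*} [Fintype m] {g : ι → m → ℝ} {ξ : ι → ℝ}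
    {v u : m → ℝ} {τ : ℝ} (hτ : 0 < τ) :
    v + τ • u ∈ {s | ∀ h, g h ⬝ᵥ v = ξ h → g h ⬝ᵥ s ≤ ξ h} ↔
      ∀ h, g h ⬝ᵥ v = ξ h → g h ⬝ᵥ u ≤ 0 := by
  refine forall_congr' fun h => imp_congr_right fun hv => ?_
  rw [dotProduct_add, dotProduct_smul, smul_eq_mul, hv, add_le_iff_nonpos_right,
    mul_nonpos_iff_pos_imp_nonpos]
  exact ⟨fun H => H.1 hτ, fun H => ⟨fun _ => H, fun _ => hτ.le⟩⟩

section Gauge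

variable {m ι : Type*} [Fintype m] [Fintype ι] (g : ι → m → ℝ) (ξ : ι → ℝ)

/-- `max 1 (maxₕ g h ⬝ᵥ y / ξ h)`, the index `none` contributing the `1`, which lets Gronwall's
lemma run on the whole time interval instead of from the last exit time. -/
noncomputable def truncGauge (y : m → ℝ) : ℝ :=
  Finset.univ.sup' Finset.univ_nonempty fun o : Option ι => o.elim 1 fun h => g h ⬝ᵥ y / ξ h

variable {g ξ}

theorem one_le_truncGauge (y : m → ℝ) : 1 ≤ truncGauge g ξ y :=
  Finset.le_sup' (fun o : Option ι => o.elim 1 fun h => g h ⬝ᵥ y / ξ h) (Finset.mem_univ none)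

theorem div_le_truncGauge (y : m → ℝ) (h : ι) : g h ⬝ᵥ y / ξ h ≤ truncGauge g ξ y :=
  Finset.le_sup' (fun o : Option ι => o.elim 1 fun h => g h ⬝ᵥ y / ξ h) (Finset.mem_univ (some h))

theorem truncGauge_le_one_iff (hξ : ∀ h, 0 < ξ h) {y : m → ℝ} :
    truncGauge g ξ y ≤ 1 ↔ ∀ h, g h ⬝ᵥ y ≤ ξ h := by
  simp [truncGauge, Option.forall, div_le_one (hξ _)]

theorem eventually_slope_truncGauge_lt {s : ℝ → m → ℝ} {s' : m → ℝ} {x r : ℝ}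
    (hs : HasDerivAt s s' x) (hr₀ : 0 < r)
    (hr : ∀ h, g h ⬝ᵥ s x / ξ h = truncGauge g ξ (s x) → g h ⬝ᵥ s' / ξ h < r) :
    ∀ᶠ z in 𝓝[>] x, slope (fun y => truncGauge g ξ (s y)) x z < r := by
  refine eventually_slope_finset_sup'_lt (ψ' := fun o => o.elim 0 fun h => g h ⬝ᵥ s' / ξ h)
    ?_ ?_
  · rintro (_ | h)
    exacts [hasDerivAt_const x 1, (hs.const_dotProduct (g h)).div_const (ξ h)]
  · rintro (_ | h) hact
    exacts [hr₀, hr h hact]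

end Gauge

section System

variable {n l p : ℕ} {F0 : Matrix (Fin n) (Fin n) ℝ} {F : Fin p → Matrix (Fin n) (Fin n) ℝ}
  {E0 : Matrix (Fin n) (Fin l) ℝ} {E : Fin p → Matrix (Fin n) (Fin l) ℝ}

@[fun_prop]
theorem continuous_matE : Continuous (matE E0 E) := by
  unfold matE; fun_prop

theorem dotProduct_matF_mulVec_add_matE_mulVec (c u : Fin n → ℝ) (q : Fin p → ℝ)
    (d : Fin l → ℝ) :
    c ⬝ᵥ ((matF F0 F q).mulVec u + (matE E0 E q).mulVec d) =
      c ⬝ᵥ (F0 *ᵥ u + E0 *ᵥ d) + (fun k => c ⬝ᵥ (F k *ᵥ u + E k *ᵥ d)) ⬝ᵥ q := by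
  rw [dotProduct.eq_def (fun k => _) q]
  simp only [matF, matE, add_mulVec, sum_mulVec, smul_mulVec, dotProduct_add, dotProduct_sum,
    dotProduct_smul, smul_eq_mul, Finset.sum_add_distrib, add_mul, mul_comm (q _)]
  ring

theorem dotProduct_field_le_of_mem_convexHull {ν η : Type*} {w : ν → Fin p → ℝ}
    {r : η → Fin l → ℝ} {c u : Fin n → ℝ} {b : ℝ}
    (hvert : ∀ j k, c ⬝ᵥ ((matF F0 F (w j)).mulVec u + (matE E0 E (w j)).mulVec (r k)) ≤ b)
    {q : Fin p → ℝ} (hq : q ∈ convexHull ℝ (range w)) {d : Fin l → ℝ}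
    (hd : d ∈ convexHull ℝ (range r)) :
    c ⬝ᵥ ((matF F0 F q).mulVec u + (matE E0 E q).mulVec d) ≤ b := by
  have hd_ext : ∀ j, c ⬝ᵥ ((matF F0 F (w j)).mulVec u + (matE E0 E (w j)).mulVec d) ≤ b := by
    intro j
    rw [dotProduct_add, dotProduct_mulVec c (matE E0 E (w j)), ← le_sub_iff_add_le']
    refine dotProduct_le_of_mem_convexHull ?_ hd
    rintro _ ⟨k, rfl⟩
    rw [← dotProduct_mulVec, le_sub_iff_add_le', ← dotProduct_add]
    exact hvert j k
  rw [dotProduct_matF_mulVec_add_matE_mulVec, ← le_sub_iff_add_le']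
  refine dotProduct_le_of_mem_convexHull ?_ hq
  rintro _ ⟨j, rfl⟩
  rw [le_sub_iff_add_le', ← dotProduct_matF_mulVec_add_matE_mulVec]
  exact hd_ext j

variable {ι : Type*} {g : ι → Fin n → ℝ} {ξ : ι → ℝ} {Q : Set (Fin p → ℝ)}
  {D : Set (Fin l → ℝ)}

variable (F0 F E0 E g ξ Q D) in
def PointsInwardOnFaces : Prop :=
  ∀ q ∈ Q, ∀ d ∈ D, ∀ z, (∀ h, g h ⬝ᵥ z ≤ ξ h) → ∀ h, g h ⬝ᵥ z = ξ h →
    g h ⬝ᵥ ((matF F0 F q).mulVec z + (matE E0 E q).mulVec d) ≤ 0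

theorem PosDInvariant.pointsInwardOnFaces
    (hinv : PosDInvariant F0 F E0 E {z | ∀ h, g h ⬝ᵥ z ≤ ξ h} Q D) :
    PointsInwardOnFaces F0 F E0 E g ξ Q D := by
  intro q hq d hd z hz h hzh
  obtain ⟨s, hs0, hs⟩ := exists_hasDerivAt_affine_ode
    (LinearMap.toContinuousLinearMap (toLin' (matF F0 F q))) ((matE E0 E q).mulVec d) z
  have hs' : ∀ t, HasDerivAt s ((matF F0 F q).mulVec (s t) + (matE E0 E q).mulVec d) t := by
    simpa using hs
  have hmem := hinv (fun _ => q) continuousOn_const (fun _ _ => hq) (fun _ => d)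
    continuousOn_const (fun _ _ => hd) s (fun t _ => hs' t) (hs0 ▸ hz)
  refine hs0 ▸ ((hs' 0).const_dotProduct (g h)).nonpos_of_forall_le fun t ht => ?_
  rw [hs0, hzh]
  exact hmem t ht h

theorem PointsInwardOnFaces.posDInvariant [Fintype ι] (hξ : ∀ h, 0 < ξ h)
    (hin : PointsInwardOnFaces F0 F E0 E g ξ Q D) :
    PosDInvariant F0 F E0 E {z | ∀ h, g h ⬝ᵥ z ≤ ξ h} Q D := by
  intro q hq hqQ δ hδ hδD s hs hs0 t ht
  have hq' := hq.mono (Icc_subset_Ici_self : Icc 0 t ⊆ Ici 0)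
  have hδ' := hδ.mono (Icc_subset_Ici_self : Icc 0 t ⊆ Ici 0)
  obtain ⟨C, hC⟩ := isCompact_Icc.exists_bound_of_continuousOn
    (f := fun x h => g h ⬝ᵥ (matE E0 E (q x)).mulVec (δ x) / ξ h) (by fun_prop)
  have hK : ∀ x ∈ Icc 0 t, ∀ h, |g h ⬝ᵥ (matE E0 E (q x)).mulVec (δ x)| / ξ h ≤ C :=
    fun x hx h => by
      rw [← abs_of_pos (hξ h), ← abs_div]
      exact (norm_le_pi_norm _ h).trans (hC x hx)
  have hC₀ : 0 ≤ C := (norm_nonneg _).trans (hC 0 ⟨le_rfl, ht⟩)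
  refine (truncGauge_le_one_iff hξ).1 <|
    le_of_frequently_slope_right_lt (W := fun x => truncGauge g ξ (s x)) (K := C) ?_
      ((truncGauge_le_one_iff hξ).2 hs0) (fun x hx r hr => ?_) t ⟨ht, le_rfl⟩
  · refine ContinuousOn.finset_sup'_apply _ fun o _ => ?_
    rcases o with _ | h
    exacts [continuousOn_const, fun x hx =>
      (((hs x hx.1).const_dotProduct (g h)).div_const (ξ h)).continuousAt.continuousWithinAt]
  have hc := one_le_truncGauge (g := g) (ξ := ξ) (s x)
  refine (eventually_slope_truncGauge_lt (hs x hx.1)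
    ((mul_nonneg hC₀ (sub_nonneg.2 hc)).trans_lt hr) fun h hact => ?_).frequently
  have hfield := dotProduct_mulVec_add_le_of_face
    (fun z hz hzh => hin (q x) (hqQ x hx.1) (δ x) (hδD x hx.1) z hz h hzh) hc
    (fun j => (div_le_iff₀ (hξ j)).1 (div_le_truncGauge _ j)) ((div_eq_iff (hξ h).ne').1 hact)
  calc _ ≤ (truncGauge g ξ (s x) - 1) * |g h ⬝ᵥ (matE E0 E (q x)).mulVec (δ x)| / ξ h :=
        div_le_div_of_nonneg_right hfield (hξ h).le
    _ ≤ C * (truncGauge g ξ (s x) - 1) := by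
        rw [mul_div_assoc, mul_comm]
        exact mul_le_mul_of_nonneg_right (hK x (Ico_subset_Icc_self hx) h) (sub_nonneg.2 hc)
    _ < r := hr

theorem posDInvariant_iff_pointsInwardOnFaces [Fintype ι] (hξ : ∀ h, 0 < ξ h) :
    PosDInvariant F0 F E0 E {z | ∀ h, g h ⬝ᵥ z ≤ ξ h} Q D ↔
      PointsInwardOnFaces F0 F E0 E g ξ Q D :=
  ⟨PosDInvariant.pointsInwardOnFaces, fun hin => hin.posDInvariant hξ⟩

theorem pointsInwardOnFaces_convexHull_iff {κ ν η : Type*} [Finite κ] {v : κ → Fin n → ℝ}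
    {w : ν → Fin p → ℝ} {r : η → Fin l → ℝ}
    (hv : convexHull ℝ (range v) = {z | ∀ h, g h ⬝ᵥ z ≤ ξ h}) :
    PointsInwardOnFaces F0 F E0 E g ξ (convexHull ℝ (range w)) (convexHull ℝ (range r)) ↔
      ∀ i j k h, g h ⬝ᵥ v i = ξ h →
        g h ⬝ᵥ ((matF F0 F (w j)).mulVec (v i) + (matE E0 E (w j)).mulVec (r k)) ≤ 0 := by
  have hvS : ∀ i, ∀ h, g h ⬝ᵥ v i ≤ ξ h := fun i =>
    hv.subset (subset_convexHull ℝ _ (mem_range_self i))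
  refine ⟨fun hin i j k h => hin _ (subset_convexHull ℝ _ (mem_range_self j)) _
    (subset_convexHull ℝ _ (mem_range_self k)) _ (hvS i) h, fun hvert q hq d hd z hz h hzh => ?_⟩
  rw [dotProduct_add, dotProduct_mulVec, ← le_neg_iff_add_nonpos_right]
  refine dotProduct_le_of_mem_convexHull_face (fun i => hvS i h) (fun i hi => ?_)
    (hv.symm.subset hz) hzh
  rw [← dotProduct_mulVec, le_neg_iff_add_nonpos_right, ← dotProduct_add]
  exact dotProduct_field_le_of_mem_convexHull (fun j k => hvert i j k h hi) hq hd

end System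

theorem posDInvariant_iff_euler_step_cone_general {n l p μ ν η H : ℕ}
    (F0 : Matrix (Fin n) (Fin n) ℝ) (F : Fin p → Matrix (Fin n) (Fin n) ℝ)
    (E0 : Matrix (Fin n) (Fin l) ℝ) (E : Fin p → Matrix (Fin n) (Fin l) ℝ)
    (v : Fin μ → Fin n → ℝ) (w : Fin ν → Fin p → ℝ) (r : Fin η → Fin l → ℝ)
    (S : Set (Fin n → ℝ)) (Q : Set (Fin p → ℝ)) (D : Set (Fin l → ℝ))
    (g : Fin H → Fin n → ℝ) (ξ : Fin H → ℝ) (hξ : ∀ h, 0 < ξ h)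
    (hS : S = convexHull ℝ (Set.range v))
    (hS' : S = {s : Fin n → ℝ | ∀ h, g h ⬝ᵥ s ≤ ξ h})
    (hQ : Q = convexHull ℝ (Set.range w))
    (hD : D = convexHull ℝ (Set.range r)) :
    PosDInvariant F0 F E0 E S Q D ↔
      ∀ τ : ℝ, 0 < τ → ∀ (i : Fin μ) (j : Fin ν) (k : Fin η),
        v i + τ • ((matF F0 F (w j)).mulVec (v i) + (matE E0 E (w j)).mulVec (r k))
          ∈ {s : Fin n → ℝ | ∀ h, g h ⬝ᵥ v i = ξ h → g h ⬝ᵥ s ≤ ξ h} := by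
  subst hQ hD
  rw [hS', posDInvariant_iff_pointsInwardOnFaces hξ,
    pointsInwardOnFaces_convexHull_iff (hS.symm.trans hS')]
  exact ⟨fun H τ hτ i j k => (add_smul_mem_activeCone_iff hτ).2 (H i j k),
    fun H i j k => (add_smul_mem_activeCone_iff one_pos).1 (H 1 one_pos i j k)⟩

/-- Theorem 4: given a half-space description of `S`, positive `D`-invariance is equivalent
to the Euler step from every vertex landing, for every `τ > 0`, in the cone `Cᵢ` defined by
the delimiting planes of `S` active at that vertex. -/
theorem posDInvariant_iff_euler_step_cone {n l p μ ν η H : ℕ}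
    (F0 : Matrix (Fin n) (Fin n) ℝ) (F : Fin p → Matrix (Fin n) (Fin n) ℝ)
    (E0 : Matrix (Fin n) (Fin l) ℝ) (E : Fin p → Matrix (Fin n) (Fin l) ℝ)
    (v : Fin μ → Fin n → ℝ) (w : Fin ν → Fin p → ℝ) (r : Fin η → Fin l → ℝ)
    (S : Set (Fin n → ℝ)) (Q : Set (Fin p → ℝ)) (D : Set (Fin l → ℝ))
    (g : Fin H → Fin n → ℝ) (ξ : Fin H → ℝ) (hξ : ∀ h, 0 < ξ h)
    (hS : S = convexHull ℝ (Set.range v))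
    (hS' : S = {s : Fin n → ℝ | ∀ h, g h ⬝ᵥ s ≤ ξ h})
    (hQ : Q = convexHull ℝ (Set.range w))
    (hD : D = convexHull ℝ (Set.range r))
    (hSint : (interior S).Nonempty) (hS0 : (0 : Fin n → ℝ) ∈ S) :
    PosDInvariant F0 F E0 E S Q D ↔
      ∀ τ : ℝ, 0 < τ → ∀ (i : Fin μ) (j : Fin ν) (k : Fin η),
        v i + τ • ((matF F0 F (w j)).mulVec (v i) + (matE E0 E (w j)).mulVec (r k))
          ∈ {s : Fin n → ℝ | ∀ h, g h ⬝ᵥ v i = ξ h → g h ⬝ᵥ s ≤ ξ h} :=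
  posDInvariant_iff_euler_step_cone_general F0 F E0 E v w r S Q D g ξ hξ hS hS' hQ hD
end

section
/- Let a, b, d, V_F, V_L, Ω_F, Ω_L be reals with a > 0, 0 < b ≤ π/2, d > a, 0 < V_F < 1, 0 < V_L < 1, Ω_F > 0, Ω_L > 0, and assume V_F ≥ V_L(1 + a·sin b/(d−a)) + 1 − cos b + a·b/(d−a), Ω_L ≤ (1−V_L)·sin b/(d+a), and (V_L·sin b + b)/(d−a) ≤ Ω_F. Then there exist reals k₁₁, k₂₂, k₂₃ such that for all q₁ ∈ [sin b/b − 1, 0], q₂ ∈ [(cos b − 1)/b, (1 − cos b)/b], q₃ ∈ [−a, a], q₄ ∈ [−a, a] the following hold: −k₁₁ + q₄k₂₂ + (b/a)q₄k₂₃ ≤ −(b/a)q₂ − V_L/a; −(d+q₃)k₂₂ − (b/a)(d+q₃)k₂₃ ≤ −(b/a)(1+q₁) − V_L·sin b/a; −k₁₁ + q₄k₂₂ − (b/a)q₄k₂₃ ≤ (b/a)q₂ − V_L/a; −(d+q₃)k₂₂ + (b/a)(d+q₃)k₂₃ ≤ (b/a)(1+q₁) − V_L·sin b/a; −(a/b)k₂₂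 − k₂₃ ≤ −Ω_L/b; (a/b)k₂₂ − k₂₃ ≤ −Ω_L/b; −k₁₁ − q₄k₂₂ + (b/a)q₄k₂₃ ≤ −(b/a)q₂ − V_L/a; −k₁₁ − q₄k₂₂ − (b/a)q₄k₂₃ ≤ (b/a)q₂ − V_L/a; together with |k₁₁| ≤ V_F/a, k₂₂ + (b/a)k₂₃ ≤ Ω_F/a, k₂₂ − (b/a)k₂₃ ≤ Ω_F/a, k₂₂ − (b/a)k₂₃ ≥ −Ω_F/a, and k₂₂ + (b/a)k₂₃ ≥ −Ω_F/a. -/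
/-!
In the coordinates `u = k₂₂ + (b/a) k₂₃`, `v = k₂₂ - (b/a) k₂₃` the polytope decouples: the
invariance inequalities 2 and 5 bound `u` from below, 4 and 6 bound `v` from above, and the
remaining four bound `k₁₁` from below by `a · max |u| |v| + (1 - cos b + V_L) / a`. Over the
uncertainty box the worst cases are `q₃ = ∓a`, `sin b ≤ b (1 + q₁) ≤ b` and `|b q₂| ≤ 1 - cos b`.
Taking `u = X` least and `v = -Y` greatest for these constraints, and `k₁₁` least, the three
solvability conditions are exactly the remaining admissibility bounds, while `Y ≤ X` because
`sin b ≤ b`.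
-/

open Set Real

theorem exists_add_mul_eq_and_sub_mul_eq {K : Type*} [Field K] [NeZero (2 : K)] {β : K}
    (hβ : β ≠ 0) (u v : K) : ∃ x y : K, x + β * y = u ∧ x - β * y = v :=
  ⟨(u + v) / 2, (u - v) / (2 * β), by field_simp; ring, by field_simp; ring⟩

section Invariance

variable {a b d s c VL ΩL k11 k22 k23 X Y q1 q2 q3 q4 : ℝ}

theorem div_le_div_mul_one_add_of_mem_Icc (ha : 0 < a) (hb : 0 < b)
    (hq1 : q1 ∈ Icc (s / b - 1) 0) : s / a ≤ b / a * (1 + q1) ∧ b / a * (1 + q1) ≤ b / a := by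
  obtain ⟨hlo, hhi⟩ := hq1
  have hs : s ≤ b * (1 + q1) := by
    have := (div_le_iff₀ hb).mp (show s / b ≤ 1 + q1 by linarith)
    linarith
  rw [div_mul_eq_mul_div]
  exact ⟨div_le_div_of_nonneg_right hs ha.le,
    div_le_div_of_nonneg_right (by nlinarith) ha.le⟩

theorem abs_div_mul_le_of_mem_Icc (ha : 0 < a) (hb : 0 < b)
    (hq2 : q2 ∈ Icc ((c - 1) / b) ((1 - c) / b)) : |b / a * q2| ≤ (1 - c) / a := by
  rw [div_mul_eq_mul_div, abs_div, abs_of_pos ha]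
  refine div_le_div_of_nonneg_right (abs_le.mpr ⟨?_, ?_⟩) ha.le
  · have := (div_le_iff₀ hb).mp hq2.1
    linarith
  · have := (le_div_iff₀ hb).mp hq2.2
    linarith

theorem gain_inequalities_of_worst_case (ha : 0 < a) (hb : 0 < b) (hY : 0 ≤ Y) (hYX : Y ≤ X)
    (hu : k22 + b / a * k23 = X) (hv : k22 - b / a * k23 = -Y)
    (hXd : b / a + VL * s / a ≤ (d - a) * X) (hYd : (d + a) * Y ≤ s / a - VL * s / a)
    (hΩL : ΩL ≤ a * Y) (hk11 : a * X + (1 - c) / a + VL / a ≤ k11)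
    (hq1 : q1 ∈ Icc (s / b - 1) 0) (hq2 : q2 ∈ Icc ((c - 1) / b) ((1 - c) / b))
    (hq3 : q3 ∈ Icc (-a) a) (hq4 : q4 ∈ Icc (-a) a) :
    -k11 + q4 * k22 + (b / a) * q4 * k23 ≤ -(b / a) * q2 - VL / a ∧
    -(d + q3) * k22 - (b / a) * (d + q3) * k23 ≤ -(b / a) * (1 + q1) - VL * s / a ∧
    -k11 + q4 * k22 - (b / a) * q4 * k23 ≤ (b / a) * q2 - VL / a ∧
    -(d + q3) * k22 + (b / a) * (d + q3) * k23 ≤ (b / a) * (1 + q1) - VL * s / a ∧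
    -(a / b) * k22 - k23 ≤ -ΩL / b ∧
    (a / b) * k22 - k23 ≤ -ΩL / b ∧
    -k11 - q4 * k22 + (b / a) * q4 * k23 ≤ -(b / a) * q2 - VL / a ∧
    -k11 - q4 * k22 - (b / a) * q4 * k23 ≤ (b / a) * q2 - VL / a := by
  obtain ⟨hs1, h1b⟩ := div_le_div_mul_one_add_of_mem_Icc ha hb hq1
  obtain ⟨hq2lo, hq2hi⟩ := abs_le.mp (abs_div_mul_le_of_mem_Icc ha hb hq2)
  have hq4a : |q4| ≤ a := abs_le.mpr hq4
  have hX : 0 ≤ X := hY.trans hYX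
  have hq4X : |q4 * X| ≤ a * X := by
    rw [abs_mul, abs_of_nonneg hX]; exact mul_le_mul_of_nonneg_right hq4a hX
  have hq4Y : |q4 * Y| ≤ a * Y := by
    rw [abs_mul, abs_of_nonneg hY]; exact mul_le_mul_of_nonneg_right hq4a hY
  obtain ⟨hq4Xlo, hq4Xhi⟩ := abs_le.mp hq4X
  obtain ⟨hq4Ylo, hq4Yhi⟩ := abs_le.mp hq4Y
  have hq3X : (d - a) * X ≤ (d + q3) * X :=
    mul_le_mul_of_nonneg_right (by linarith [hq3.1]) hX
  have hq3Y : (d + q3) * Y ≤ (d + a) * Y := mul_le_mul_of_nonneg_right (by linarith [hq3.2]) hY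
  have haYX : a * Y ≤ a * X := mul_le_mul_of_nonneg_left hYX ha.le
  have hΩLY : ΩL / b ≤ a / b * Y := by
    rw [div_mul_eq_mul_div]; exact div_le_div_of_nonneg_right hΩL hb.le
  have hΩLX : a / b * Y ≤ a / b * X := mul_le_mul_of_nonneg_left hYX (div_pos ha hb).le
  have e1 : q4 * k22 + b / a * q4 * k23 = q4 * X := by linear_combination q4 * hu
  have e2 : q4 * k22 - b / a * q4 * k23 = -(q4 * Y) := by linear_combination q4 * hv
  have e3 : (d + q3) * k22 + b / a * (d + q3) * k23 = (d + q3) * X := by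
    linear_combination (d + q3) * hu
  have e4 : (d + q3) * k22 - b / a * (d + q3) * k23 = -((d + q3) * Y) := by
    linear_combination (d + q3) * hv
  have e5 : a / b * k22 + k23 = a / b * X := by
    rw [← hu]; field_simp
  have e6 : a / b * k22 - k23 = a / b * -Y := by
    rw [← hv]; field_simp
  rw [neg_div]
  refine ⟨?_, ?_, ?_, ?_, ?_, ?_, ?_, ?_⟩ <;> linarith

end Invariance

theorem vmp_gain_polytope_nonempty_general (a b d VF VL ΩF ΩL : ℝ)
    (ha : 0 < a) (hb0 : 0 < b) (hb : b ≤ π / 2) (hd : a < d)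
    (hVL0 : 0 < VL) (hVL1 : VL < 1)
    (h1 : VF ≥ VL * (1 + a * Real.sin b / (d - a)) + 1 - Real.cos b + a * b / (d - a))
    (h2 : ΩL ≤ (1 - VL) * Real.sin b / (d + a))
    (h3 : (VL * Real.sin b + b) / (d - a) ≤ ΩF) :
    ∃ k11 k22 k23 : ℝ,
      (∀ q1 q2 q3 q4 : ℝ,
        q1 ∈ Icc (Real.sin b / b - 1) 0 →
        q2 ∈ Icc ((Real.cos b - 1) / b) ((1 - Real.cos b) / b) →
        q3 ∈ Icc (-a) a → q4 ∈ Icc (-a) a →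
        (-k11 + q4 * k22 + (b / a) * q4 * k23 ≤ -(b / a) * q2 - VL / a ∧
         -(d + q3) * k22 - (b / a) * (d + q3) * k23 ≤ -(b / a) * (1 + q1)
            - VL * Real.sin b / a ∧
         -k11 + q4 * k22 - (b / a) * q4 * k23 ≤ (b / a) * q2 - VL / a ∧
         -(d + q3) * k22 + (b / a) * (d + q3) * k23 ≤ (b / a) * (1 + q1)
            - VL * Real.sin b / a ∧
         -(a / b) * k22 - k23 ≤ -ΩL / b ∧
         (a / b) * k22 - k23 ≤ -ΩL / b ∧
         -k11 - q4 * k22 + (b / a) * q4 * k23 ≤ -(b / a) * q2 - VL / a ∧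
         -k11 - q4 * k22 - (b / a) * q4 * k23 ≤ (b / a) * q2 - VL / a)) ∧
      |k11| ≤ VF / a ∧
      k22 + (b / a) * k23 ≤ ΩF / a ∧
      k22 - (b / a) * k23 ≤ ΩF / a ∧
      k22 - (b / a) * k23 ≥ -(ΩF / a) ∧
      k22 + (b / a) * k23 ≥ -(ΩF / a) := by
  have hs : 0 ≤ sin b := sin_nonneg_of_nonneg_of_le_pi hb0.le (by linarith [pi_pos])
  have hsb : sin b ≤ b := sin_le hb0.le
  have hdm : 0 < d - a := sub_pos.mpr hd
  have hdp : 0 < d + a := by linarith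
  set X := (VL * sin b + b) / (d - a) / a with hX
  set Y := (1 - VL) * sin b / (d + a) / a with hY
  set k11 := (VL * (1 + a * sin b / (d - a)) + 1 - cos b + a * b / (d - a)) / a with hk11
  have hY0 : 0 ≤ Y := div_nonneg (div_nonneg (mul_nonneg (by linarith) hs) (by linarith)) ha.le
  have hYX : Y ≤ X := div_le_div_of_nonneg_right
    (div_le_div₀ (by positivity) (by nlinarith) (by linarith) (by linarith)) ha.le
  have hXΩF : X ≤ ΩF / a := div_le_div_of_nonneg_right h3 ha.le
  have hk11X : a * X + (1 - cos b) / a + VL / a = k11 := by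
    rw [hX, hk11]; field_simp [hdm.ne']; ring
  have hk11VF : k11 ≤ VF / a := div_le_div_of_nonneg_right h1 ha.le
  have hk11_nonneg : 0 ≤ k11 := by
    rw [← hk11X]; have := cos_le_one b; positivity
  obtain ⟨k22, k23, hu, hv⟩ :=
    exists_add_mul_eq_and_sub_mul_eq (div_ne_zero hb0.ne' ha.ne') X (-Y)
  refine ⟨k11, k22, k23, fun q1 q2 q3 q4 hq1 hq2 hq3 hq4 =>
    gain_inequalities_of_worst_case ha hb0 hY0 hYX hu hv ?_ ?_ ?_ hk11X.le hq1 hq2 hq3 hq4,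
    abs_le.mpr ⟨by linarith, hk11VF⟩, by linarith, by linarith, by linarith, by linarith⟩
  · exact le_of_eq (by rw [hX]; field_simp [hdm.ne']; ring)
  · exact le_of_eq (by rw [hY]; field_simp [hdp.ne'])
  · rwa [hY, mul_div_cancel₀ _ ha.ne']

/-- Under the solvability conditions of the VMP, the polytope of feasible feedback gains
`(k₁₁, k₂₂, k₂₃)`, defined by the positive `D`-invariance inequalities (parametrized by the
uncertainty vector `(q₁,q₂,q₃,q₄)`) together with the admissibility inequalities,
is nonempty. -/
theorem vmp_gain_polytope_nonempty (a b d VF VL ΩF ΩL : ℝ)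
    (ha : 0 < a) (hb0 : 0 < b) (hb : b ≤ π / 2) (hd : a < d)
    (hVF0 : 0 < VF) (hVF1 : VF < 1) (hVL0 : 0 < VL) (hVL1 : VL < 1)
    (hΩF : 0 < ΩF) (hΩL : 0 < ΩL)
    (h1 : VF ≥ VL * (1 + a * Real.sin b / (d - a)) + 1 - Real.cos b + a * b / (d - a))
    (h2 : ΩL ≤ (1 - VL) * Real.sin b / (d + a))
    (h3 : (VL * Real.sin b + b) / (d - a) ≤ ΩF) :
    ∃ k11 k22 k23 : ℝ,
      (∀ q1 q2 q3 q4 : ℝ,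
        q1 ∈ Icc (Real.sin b / b - 1) 0 →
        q2 ∈ Icc ((Real.cos b - 1) / b) ((1 - Real.cos b) / b) →
        q3 ∈ Icc (-a) a → q4 ∈ Icc (-a) a →
        (-k11 + q4 * k22 + (b / a) * q4 * k23 ≤ -(b / a) * q2 - VL / a ∧
         -(d + q3) * k22 - (b / a) * (d + q3) * k23 ≤ -(b / a) * (1 + q1)
            - VL * Real.sin b / a ∧
         -k11 + q4 * k22 - (b / a) * q4 * k23 ≤ (b / a) * q2 - VL / a ∧
         -(d + q3) * k22 + (b / a) * (d + q3) * k23 ≤ (b / a) * (1 + q1)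
            - VL * Real.sin b / a ∧
         -(a / b) * k22 - k23 ≤ -ΩL / b ∧
         (a / b) * k22 - k23 ≤ -ΩL / b ∧
         -k11 - q4 * k22 + (b / a) * q4 * k23 ≤ -(b / a) * q2 - VL / a ∧
         -k11 - q4 * k22 - (b / a) * q4 * k23 ≤ (b / a) * q2 - VL / a)) ∧
      |k11| ≤ VF / a ∧
      k22 + (b / a) * k23 ≤ ΩF / a ∧
      k22 - (b / a) * k23 ≤ ΩF / a ∧
      k22 - (b / a) * k23 ≥ -(ΩF / a) ∧
      k22 + (b / a) * k23 ≥ -(ΩF / a) :=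
  vmp_gain_polytope_nonempty_general a b d VF VL ΩF ΩL ha hb0 hb hd hVL0 hVL1 h1 h2 h3
end

section
/- Let a > 0, d > a, 0 < b ≤ π/2 and 0 < V < 1. Then: (i) V < V(1 + a·sin b/(d−a)) + 1 − cos b + a·b/(d−a), so the chain propagation condition V_{k+1} ≥ V_k(1 + a·sin b/(d−a)) + 1 − cos b + a·b/(d−a) cannot hold with V_{k+1} = V_k = V; and (ii) (V·sin b + b)/(d−a) > (1−V)·sin b/(d+a), so no real Ω can satisfy (V·sin b + b)/(d−a) ≤ Ω ≤ (1−V)·sin b/(d+a). -/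
open Real

/-- With identical parameters along the chain, the propagation conditions of the VMP
are infeasible: (i) the velocity propagation inequality cannot hold with equal
velocity bounds, and (ii) no angular-velocity bound `Ω` can satisfy both chain
inequalities. -/
theorem chain_identical_parameters_infeasible (a b d V : ℝ)
    (ha : 0 < a) (hd : a < d) (hb0 : 0 < b) (hb : b ≤ π / 2)
    (hV0 : 0 < V) (hV1 : V < 1) :
    (V < V * (1 + a * Real.sin b / (d - a)) + 1 - Real.cos b + a * b / (d - a) ∧
      ¬ (V ≥ V * (1 + a * Real.sin b / (d - a)) + 1 - Real.cos b + a * b / (d - a))) ∧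
    ((V * Real.sin b + b) / (d - a) > (1 - V) * Real.sin b / (d + a) ∧
      ¬ ∃ Ω : ℝ, (V * Real.sin b + b) / (d - a) ≤ Ω ∧
        Ω ≤ (1 - V) * Real.sin b / (d + a)) := by
  have hda : (0:ℝ) < d - a := by linarith
  have hdpa : (0:ℝ) < d + a := by linarith
  have hsin : 0 < Real.sin b := Real.sin_pos_of_pos_of_lt_pi hb0 (lt_of_le_of_lt hb (by linarith [Real.pi_pos]))
  have hcos : Real.cos b < 1 := by
    nlinarith [Real.sin_sq_add_cos_sq b, hsin]
  have h1 : V < V * (1 + a * Real.sin b / (d - a)) + 1 - Real.cos b + a * b / (d - a) := by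
    have t1 : 0 < V * (a * Real.sin b / (d - a)) := by positivity
    have t2 : 0 < a * b / (d - a) := by positivity
    nlinarith
  have hsinle : Real.sin b ≤ b := Real.sin_le hb0.le
  have h2 : (V * Real.sin b + b) / (d - a) > (1 - V) * Real.sin b / (d + a) := by
    rw [gt_iff_lt, div_lt_div_iff₀ hdpa hda]
    have : (1 - V) * Real.sin b < (V * Real.sin b + b) := by nlinarith
    nlinarith
  refine ⟨⟨h1, not_le.mpr h1⟩, h2, ?_⟩
  rintro ⟨Ω, hl, hr⟩
  exact absurd (hl.trans hr) (not_le.mpr h2)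
end

section
/- Let n ≥ 2 and for k ∈ {1,…,n} let a_k > 0, d_k > a_k and 0 < b_k ≤ π/2; set m_k = a_k·sin b_k/(d_k − a_k) and c_k = 1 − cos b_k + a_k·b_k/(d_k − a_k). Then there exist no reals V₁,…,V_n with 0 < V_k < 1 for all k that satisfy both the chain conditions V_{k+1} ≥ V_k(1 + m_{k+1}) + c_{k+1} for every k ∈ {1,…,n−1} and the closing condition V₁ ≥ V_n(1 + m₁) + c₁. In other words, the chain of robots cannot be closed. -/
open Real

/-- The chain of robots cannot be closed: there are no velocity bounds
`0 < V_k < 1` satisfying both the chain propagation conditions and the closing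
condition with indices `(n, 1)`. -/
theorem chain_cannot_be_closed (n : ℕ) (hn : 2 ≤ n)
    (a b d : ℕ → ℝ)
    (ha : ∀ k, 1 ≤ k → k ≤ n → 0 < a k)
    (hd : ∀ k, 1 ≤ k → k ≤ n → a k < d k)
    (hb0 : ∀ k, 1 ≤ k → k ≤ n → 0 < b k)
    (hb : ∀ k, 1 ≤ k → k ≤ n → b k ≤ π / 2) :
    ¬ ∃ V : ℕ → ℝ,
      (∀ k, 1 ≤ k → k ≤ n → 0 < V k ∧ V k < 1) ∧
      (∀ k, 1 ≤ k → k + 1 ≤ n →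
        V (k + 1) ≥ V k * (1 + a (k + 1) * Real.sin (b (k + 1)) / (d (k + 1) - a (k + 1)))
          + (1 - Real.cos (b (k + 1))
              + a (k + 1) * b (k + 1) / (d (k + 1) - a (k + 1)))) ∧
      V 1 ≥ V n * (1 + a 1 * Real.sin (b 1) / (d 1 - a 1))
        + (1 - Real.cos (b 1) + a 1 * b 1 / (d 1 - a 1)) := by
  rintro ⟨V, hV, hchain, hclose⟩
  -- generic facts about m_k and c_k for 1 ≤ k ≤ n
  have key : ∀ k, 1 ≤ k → k ≤ n →
      0 ≤ a k * Real.sin (b k) / (d k - a k) ∧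
      0 < 1 - Real.cos (b k) + a k * b k / (d k - a k) := by
    intro k h1 h2
    have hak := ha k h1 h2
    have hdk : (0:ℝ) < d k - a k := sub_pos.mpr (hd k h1 h2)
    have hbk := hb0 k h1 h2
    have hbk2 := hb k h1 h2
    have hsin : 0 ≤ Real.sin (b k) :=
      Real.sin_nonneg_of_nonneg_of_le_pi hbk.le (hbk2.trans (by linarith [Real.pi_pos]))
    have hcos : Real.cos (b k) ≤ 1 := Real.cos_le_one _
    constructor
    · positivity
    · have : 0 < a k * b k / (d k - a k) := by positivity
      linarith
  -- V is increasing along the chain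
  have step : ∀ k, 1 ≤ k → k + 1 ≤ n → V k < V (k + 1) := by
    intro k h1 h2
    have h := hchain k h1 h2
    obtain ⟨hm, hc⟩ := key (k+1) le_add_self h2
    have hVk := (hV k h1 (by omega)).1
    nlinarith
  -- hence V 1 ≤ V n
  have mono : ∀ k, 1 ≤ k → k ≤ n → V 1 ≤ V k := by
    intro k h1 h2
    induction k with
    | zero => omega
    | succ j ih =>
      rcases Nat.lt_or_ge 1 (j+1) with hj | hj
      · have hj1 : 1 ≤ j := by omega
        exact (ih hj1 (by omega)).trans (step j hj1 h2).le
      · have : j + 1 = 1 := by omega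
        rw [this]
  have h1n : V 1 ≤ V n := mono n (by omega) le_rfl
  -- closing condition gives V n < V 1
  obtain ⟨hm, hc⟩ := key 1 le_rfl (by omega)
  have hVn := (hV n (by omega) le_rfl).1
  nlinarith [hclose]
end

section
/- Let a > 0, 0 < b ≤ π/2, and let q₁, q₂, q₃, q₄, d, V_F, V_L, Ω_F, Ω_L be reals with d + q₃ > 0, q₄ > 0, V_L ≥ 0, V_F ≥ 0, Ω_L ≥ 0, Ω_F ≥ 0 and 1 + q₁ ≥ 0. Then there exist reals k₂₂, k₂₃ satisfying all of: k₂₂ ≥ −(b/a)k₂₃ + (b(1+q₁) + V_L sin b)/(a(d+q₃)); k₂₂ ≥ (b/a)k₂₃ + (−b(1+q₁) + V_L sin b)/(a(d+q₃)); k₂₂ ≥ −(b/a)k₂₃ + Ω_L/a; k₂₂ ≥ (b/a)k₂₃ + (−V_F + b q₂ + V_L)/(a q₄); k₂₂ ≥ −(b/a)k₂₃ + (−V_F − b q₂ + V_L)/(a q₄); k₂₂ ≥ (b/a)k₂₃ − Ω_F/a; k₂₂ ≥ −(b/a)k₂₃ − Ω_F/a; k₂₂ ≤ (b/a)k₂₃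 − Ω_L/a; k₂₂ ≤ −(b/a)k₂₃ + (V_F − b q₂ − V_L)/(a q₄); k₂₂ ≤ (b/a)k₂₃ + (V_F + b q₂ − V_L)/(a q₄); k₂₂ ≤ −(b/a)k₂₃ + Ω_F/a; k₂₂ ≤ (b/a)k₂₃ + Ω_F/a; if and only if the following four conditions hold: Ω_L ≤ (b(1+q₁) − V_L sin b)/(d+q₃); Ω_F ≥ (b(1+q₁) + V_L sin b)/(d+q₃); V_F ≥ V_L(1 + q₄ sin b/(d+q₃)) + b(q₂ + q₄(1+q₁)/(d+q₃)); and V_F ≥ V_L(1 + q₄ sin b/(d+q₃)) − b(q₂ + q₄(1+q₁)/(d+q₃)). -/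
open Real

set_option maxHeartbeats 2000000

/-- Fourier–Motzkin elimination of the variables `k₂₂` and `k₂₃` (case `q₄ > 0`):
the twelve inequalities in `(k₂₂, k₂₃)` are solvable iff the four non-trivial
solvability conditions on the problem parameters hold. -/
theorem fourier_motzkin_eliminate_k22_k23 (a b q1 q2 q3 q4 d VF VL ΩF ΩL : ℝ)
    (ha : 0 < a) (hb0 : 0 < b) (hb : b ≤ π / 2)
    (hdq : 0 < d + q3) (hq4 : 0 < q4)
    (hVL : 0 ≤ VL) (hVF : 0 ≤ VF) (hΩL : 0 ≤ ΩL) (hΩF : 0 ≤ ΩF)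
    (hq1 : 0 ≤ 1 + q1) :
    (∃ k22 k23 : ℝ,
      k22 ≥ -(b / a) * k23 + (b * (1 + q1) + VL * Real.sin b) / (a * (d + q3)) ∧
      k22 ≥ (b / a) * k23 + (-(b * (1 + q1)) + VL * Real.sin b) / (a * (d + q3)) ∧
      k22 ≥ -(b / a) * k23 + ΩL / a ∧
      k22 ≥ (b / a) * k23 + (-VF + b * q2 + VL) / (a * q4) ∧
      k22 ≥ -(b / a) * k23 + (-VF - b * q2 + VL) / (a * q4) ∧
      k22 ≥ (b / a) * k23 - ΩF / a ∧
      k22 ≥ -(b / a) * k23 - ΩF / a ∧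
      k22 ≤ (b / a) * k23 - ΩL / a ∧
      k22 ≤ -(b / a) * k23 + (VF - b * q2 - VL) / (a * q4) ∧
      k22 ≤ (b / a) * k23 + (VF + b * q2 - VL) / (a * q4) ∧
      k22 ≤ -(b / a) * k23 + ΩF / a ∧
      k22 ≤ (b / a) * k23 + ΩF / a) ↔
    (ΩL ≤ (b * (1 + q1) - VL * Real.sin b) / (d + q3) ∧
     ΩF ≥ (b * (1 + q1) + VL * Real.sin b) / (d + q3) ∧
     VF ≥ VL * (1 + q4 * Real.sin b / (d + q3))
        + b * (q2 + q4 * (1 + q1) / (d + q3)) ∧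
     VF ≥ VL * (1 + q4 * Real.sin b / (d + q3))
        - b * (q2 + q4 * (1 + q1) / (d + q3))) := by
  have hs0 : 0 ≤ Real.sin b :=
    Real.sin_nonneg_of_nonneg_of_le_pi hb0.le (hb.trans (by linarith [Real.pi_pos]))
  have key : (∃ k22 k23 : ℝ,
      k22 ≥ -(b / a) * k23 + (b * (1 + q1) + VL * Real.sin b) / (a * (d + q3)) ∧
      k22 ≥ (b / a) * k23 + (-(b * (1 + q1)) + VL * Real.sin b) / (a * (d + q3)) ∧
      k22 ≥ -(b / a) * k23 + ΩL / a ∧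
      k22 ≥ (b / a) * k23 + (-VF + b * q2 + VL) / (a * q4) ∧
      k22 ≥ -(b / a) * k23 + (-VF - b * q2 + VL) / (a * q4) ∧
      k22 ≥ (b / a) * k23 - ΩF / a ∧
      k22 ≥ -(b / a) * k23 - ΩF / a ∧
      k22 ≤ (b / a) * k23 - ΩL / a ∧
      k22 ≤ -(b / a) * k23 + (VF - b * q2 - VL) / (a * q4) ∧
      k22 ≤ (b / a) * k23 + (VF + b * q2 - VL) / (a * q4) ∧
      k22 ≤ -(b / a) * k23 + ΩF / a ∧
      k22 ≤ (b / a) * k23 + ΩF / a) ↔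
    (∃ u v : ℝ,
      (b * (1 + q1) + VL * Real.sin b) / (d + q3) ≤ v ∧
      (-(b * (1 + q1)) + VL * Real.sin b) / (d + q3) ≤ u ∧
      ΩL ≤ v ∧
      (-VF + b * q2 + VL) / q4 ≤ u ∧
      (-VF - b * q2 + VL) / q4 ≤ v ∧
      -ΩF ≤ u ∧
      -ΩF ≤ v ∧
      u ≤ -ΩL ∧
      v ≤ (VF - b * q2 - VL) / q4 ∧
      u ≤ (VF + b * q2 - VL) / q4 ∧
      v ≤ ΩF ∧
      u ≤ ΩF) := by
    constructor
    · rintro ⟨k22, k23, h1, h2, h3, h4, h5, h6, h7, h8, h9, h10, h11, h12⟩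
      refine ⟨a * k22 - b * k23, a * k22 + b * k23, ?_, ?_, ?_, ?_, ?_, ?_, ?_, ?_, ?_, ?_, ?_, ?_⟩
      · rw [ge_iff_le, show -(b / a) * k23 + (b * (1 + q1) + VL * Real.sin b) / (a * (d + q3))
            = ((b * (1 + q1) + VL * Real.sin b) / (d + q3) - b * k23) / a from by field_simp [ha.ne', hdq.ne', hq4.ne']; ring,
          div_le_iff₀ ha] at h1
        linarith
      · rw [ge_iff_le, show (b / a) * k23 + (-(b * (1 + q1)) + VL * Real.sin b) / (a * (d + q3))
            = ((-(b * (1 + q1)) + VL * Real.sin b) / (d + q3) + b * k23) / a from by field_simp [ha.ne', hdq.ne', hq4.ne']; ring,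
          div_le_iff₀ ha] at h2
        linarith
      · rw [ge_iff_le, show -(b / a) * k23 + ΩL / a = (ΩL - b * k23) / a from by field_simp [ha.ne', hdq.ne', hq4.ne']; ring,
          div_le_iff₀ ha] at h3
        linarith
      · rw [ge_iff_le, show (b / a) * k23 + (-VF + b * q2 + VL) / (a * q4)
            = ((-VF + b * q2 + VL) / q4 + b * k23) / a from by field_simp [ha.ne', hdq.ne', hq4.ne']; ring, div_le_iff₀ ha] at h4
        linarith
      · rw [ge_iff_le, show -(b / a) * k23 + (-VF - b * q2 + VL) / (a * q4)
            = ((-VF - b * q2 + VL) / q4 - b * k23) / a from by field_simp [ha.ne', hdq.ne', hq4.ne']; ring, div_le_iff₀ ha] at h5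
        linarith
      · rw [ge_iff_le, show (b / a) * k23 - ΩF / a = (-ΩF + b * k23) / a from by field_simp [ha.ne', hdq.ne', hq4.ne']; ring,
          div_le_iff₀ ha] at h6
        linarith
      · rw [ge_iff_le, show -(b / a) * k23 - ΩF / a = (-ΩF - b * k23) / a from by field_simp [ha.ne', hdq.ne', hq4.ne']; ring,
          div_le_iff₀ ha] at h7
        linarith
      · rw [show (b / a) * k23 - ΩL / a = (-ΩL + b * k23) / a from by field_simp [ha.ne', hdq.ne', hq4.ne']; ring,
          le_div_iff₀ ha] at h8
        linarith
      · rw [show -(b / a) * k23 + (VF - b * q2 - VL) / (a * q4)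
            = ((VF - b * q2 - VL) / q4 - b * k23) / a from by field_simp [ha.ne', hdq.ne', hq4.ne']; ring, le_div_iff₀ ha] at h9
        linarith
      · rw [show (b / a) * k23 + (VF + b * q2 - VL) / (a * q4)
            = ((VF + b * q2 - VL) / q4 + b * k23) / a from by field_simp [ha.ne', hdq.ne', hq4.ne']; ring, le_div_iff₀ ha] at h10
        linarith
      · rw [show -(b / a) * k23 + ΩF / a = (ΩF - b * k23) / a from by field_simp [ha.ne', hdq.ne', hq4.ne']; ring,
          le_div_iff₀ ha] at h11
        linarith
      · rw [show (b / a) * k23 + ΩF / a = (ΩF + b * k23) / a from by field_simp [ha.ne', hdq.ne', hq4.ne']; ring,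
          le_div_iff₀ ha] at h12
        linarith
    · rintro ⟨u, v, g1, g2, g3, g4, g5, g6, g7, g8, g9, g10, g11, g12⟩
      refine ⟨(u + v) / (2 * a), (v - u) / (2 * b), ?_, ?_, ?_, ?_, ?_, ?_, ?_, ?_, ?_, ?_, ?_, ?_⟩
      · rw [ge_iff_le, ← sub_nonneg,
          show (u + v) / (2 * a) - (-(b / a) * ((v - u) / (2 * b))
              + (b * (1 + q1) + VL * Real.sin b) / (a * (d + q3)))
            = (v - (b * (1 + q1) + VL * Real.sin b) / (d + q3)) / a from by
            field_simp [ha.ne', hb0.ne', hdq.ne', hq4.ne']; ring]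
        exact div_nonneg (by linarith) ha.le
      · rw [ge_iff_le, ← sub_nonneg,
          show (u + v) / (2 * a) - ((b / a) * ((v - u) / (2 * b))
              + (-(b * (1 + q1)) + VL * Real.sin b) / (a * (d + q3)))
            = (u - (-(b * (1 + q1)) + VL * Real.sin b) / (d + q3)) / a from by
            field_simp [ha.ne', hb0.ne', hdq.ne', hq4.ne']; ring]
        exact div_nonneg (by linarith) ha.le
      · rw [ge_iff_le, ← sub_nonneg,
          show (u + v) / (2 * a) - (-(b / a) * ((v - u) / (2 * b)) + ΩL / a)
            = (v - ΩL) / a from by field_simp [ha.ne', hb0.ne', hdq.ne', hq4.ne']; ring]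
        exact div_nonneg (by linarith) ha.le
      · rw [ge_iff_le, ← sub_nonneg,
          show (u + v) / (2 * a) - ((b / a) * ((v - u) / (2 * b))
              + (-VF + b * q2 + VL) / (a * q4))
            = (u - (-VF + b * q2 + VL) / q4) / a from by field_simp [ha.ne', hb0.ne', hdq.ne', hq4.ne']; ring]
        exact div_nonneg (by linarith) ha.le
      · rw [ge_iff_le, ← sub_nonneg,
          show (u + v) / (2 * a) - (-(b / a) * ((v - u) / (2 * b))
              + (-VF - b * q2 + VL) / (a * q4))
            = (v - (-VF - b * q2 + VL) / q4) / a from by field_simp [ha.ne', hb0.ne', hdq.ne', hq4.ne']; ring]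
        exact div_nonneg (by linarith) ha.le
      · rw [ge_iff_le, ← sub_nonneg,
          show (u + v) / (2 * a) - ((b / a) * ((v - u) / (2 * b)) - ΩF / a)
            = (u - -ΩF) / a from by field_simp [ha.ne', hb0.ne', hdq.ne', hq4.ne']; ring]
        exact div_nonneg (by linarith) ha.le
      · rw [ge_iff_le, ← sub_nonneg,
          show (u + v) / (2 * a) - (-(b / a) * ((v - u) / (2 * b)) - ΩF / a)
            = (v - -ΩF) / a from by field_simp [ha.ne', hb0.ne', hdq.ne', hq4.ne']; ring]
        exact div_nonneg (by linarith) ha.le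
      · rw [← sub_nonneg,
          show (b / a) * ((v - u) / (2 * b)) - ΩL / a - (u + v) / (2 * a)
            = (-ΩL - u) / a from by field_simp [ha.ne', hb0.ne', hdq.ne', hq4.ne']; ring]
        exact div_nonneg (by linarith) ha.le
      · rw [← sub_nonneg,
          show -(b / a) * ((v - u) / (2 * b)) + (VF - b * q2 - VL) / (a * q4)
              - (u + v) / (2 * a)
            = ((VF - b * q2 - VL) / q4 - v) / a from by field_simp [ha.ne', hb0.ne', hdq.ne', hq4.ne']; ring]
        exact div_nonneg (by linarith) ha.le
      · rw [← sub_nonneg,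
          show (b / a) * ((v - u) / (2 * b)) + (VF + b * q2 - VL) / (a * q4)
              - (u + v) / (2 * a)
            = ((VF + b * q2 - VL) / q4 - u) / a from by field_simp [ha.ne', hb0.ne', hdq.ne', hq4.ne']; ring]
        exact div_nonneg (by linarith) ha.le
      · rw [← sub_nonneg,
          show -(b / a) * ((v - u) / (2 * b)) + ΩF / a - (u + v) / (2 * a)
            = (ΩF - v) / a from by field_simp [ha.ne', hb0.ne', hdq.ne', hq4.ne']; ring]
        exact div_nonneg (by linarith) ha.le
      · rw [← sub_nonneg,
          show (b / a) * ((v - u) / (2 * b)) + ΩF / a - (u + v) / (2 * a)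
            = (ΩF - u) / a from by field_simp [ha.ne', hb0.ne', hdq.ne', hq4.ne']; ring]
        exact div_nonneg (by linarith) ha.le
  rw [key]
  constructor
  · rintro ⟨u, v, g1, g2, g3, g4, g5, g6, g7, g8, g9, g10, g11, g12⟩
    have t1 := g2.trans g8
    rw [div_le_iff₀ hdq] at t1
    have t2 := g1.trans g11
    have t3 := g1.trans g9
    rw [div_le_div_iff₀ hdq hq4] at t3
    have t4 := g2.trans g10
    rw [div_le_div_iff₀ hdq hq4] at t4
    refine ⟨?_, t2, ?_, ?_⟩
    · rw [le_div_iff₀ hdq]; linarith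
    · rw [ge_iff_le, show VL * (1 + q4 * Real.sin b / (d + q3))
          + b * (q2 + q4 * (1 + q1) / (d + q3))
        = (VL * (d + q3) + VL * (q4 * Real.sin b) + b * q2 * (d + q3)
            + b * (q4 * (1 + q1))) / (d + q3) from by field_simp [ha.ne', hb0.ne', hdq.ne', hq4.ne']; ring, div_le_iff₀ hdq]
      nlinarith
    · rw [ge_iff_le, show VL * (1 + q4 * Real.sin b / (d + q3))
          - b * (q2 + q4 * (1 + q1) / (d + q3))
        = (VL * (d + q3) + VL * (q4 * Real.sin b) - b * q2 * (d + q3)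
            - b * (q4 * (1 + q1))) / (d + q3) from by field_simp [ha.ne', hb0.ne', hdq.ne', hq4.ne']; ring, div_le_iff₀ hdq]
      nlinarith
  · rintro ⟨hc1, hc2, hc3, hc4⟩
    have c1 : ΩL * (d + q3) ≤ b * (1 + q1) - VL * Real.sin b := (le_div_iff₀ hdq).mp hc1
    have c2 : b * (1 + q1) + VL * Real.sin b ≤ ΩF * (d + q3) := (div_le_iff₀ hdq).mp hc2
    have c3 : VL * (d + q3) + VL * (q4 * Real.sin b) + b * q2 * (d + q3)
        + b * (q4 * (1 + q1)) ≤ VF * (d + q3) := by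
      rw [ge_iff_le, show VL * (1 + q4 * Real.sin b / (d + q3))
          + b * (q2 + q4 * (1 + q1) / (d + q3))
        = (VL * (d + q3) + VL * (q4 * Real.sin b) + b * q2 * (d + q3)
            + b * (q4 * (1 + q1))) / (d + q3) from by field_simp [ha.ne', hb0.ne', hdq.ne', hq4.ne']; ring,
        div_le_iff₀ hdq] at hc3
      linarith
    have c4 : VL * (d + q3) + VL * (q4 * Real.sin b) - b * q2 * (d + q3)
        - b * (q4 * (1 + q1)) ≤ VF * (d + q3) := by
      rw [ge_iff_le, show VL * (1 + q4 * Real.sin b / (d + q3))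
          - b * (q2 + q4 * (1 + q1) / (d + q3))
        = (VL * (d + q3) + VL * (q4 * Real.sin b) - b * q2 * (d + q3)
            - b * (q4 * (1 + q1))) / (d + q3) from by field_simp [ha.ne', hb0.ne', hdq.ne', hq4.ne']; ring,
        div_le_iff₀ hdq] at hc4
      linarith
    have hbq1 : 0 ≤ b * (1 + q1) := mul_nonneg hb0.le hq1
    have hVs : 0 ≤ VL * Real.sin b := mul_nonneg hVL hs0
    have hVsq : 0 ≤ VL * (q4 * Real.sin b) := mul_nonneg hVL (mul_nonneg hq4.le hs0)
    have hLF : ΩL ≤ ΩF := by nlinarith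
    have hVLF : VL ≤ VF := by nlinarith
    -- leaf inequalities
    have pa1b2 : (b * (1 + q1) + VL * Real.sin b) / (d + q3) ≤ (VF - b * q2 - VL) / q4 := by
      rw [div_le_div_iff₀ hdq hq4]; nlinarith
    have pa3b2 : ΩL ≤ (VF - b * q2 - VL) / q4 := by
      rw [le_div_iff₀ hq4]; nlinarith
    have pa5b2 : (-VF - b * q2 + VL) / q4 ≤ (VF - b * q2 - VL) / q4 :=
      (div_le_div_iff_of_pos_right hq4).mpr (by linarith)
    have pa7b2 : -ΩF ≤ (VF - b * q2 - VL) / q4 := by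
      rw [le_div_iff₀ hq4]; nlinarith [mul_nonneg hΩF hq4.le]
    have pa5b4 : (-VF - b * q2 + VL) / q4 ≤ ΩF := by
      rw [div_le_iff₀ hq4]; nlinarith
    have pa2b1 : (-(b * (1 + q1)) + VL * Real.sin b) / (d + q3) ≤ -ΩL := by
      rw [div_le_iff₀ hdq]; linarith
    have pa4b1 : (-VF + b * q2 + VL) / q4 ≤ -ΩL := by
      rw [div_le_iff₀ hq4]; nlinarith
    have pa2b3 : (-(b * (1 + q1)) + VL * Real.sin b) / (d + q3)
        ≤ (VF + b * q2 - VL) / q4 := by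
      rw [div_le_div_iff₀ hdq hq4]; nlinarith
    have pa4b3 : (-VF + b * q2 + VL) / q4 ≤ (VF + b * q2 - VL) / q4 :=
      (div_le_div_iff_of_pos_right hq4).mpr (by linarith)
    have pa6b3 : -ΩF ≤ (VF + b * q2 - VL) / q4 := by
      rw [le_div_iff₀ hq4]; nlinarith [mul_nonneg hΩF hq4.le]
    have pa2b5 : (-(b * (1 + q1)) + VL * Real.sin b) / (d + q3) ≤ ΩF := by
      rw [div_le_iff₀ hdq]; linarith
    have pa4b5 : (-VF + b * q2 + VL) / q4 ≤ ΩF := by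
      rw [div_le_iff₀ hq4]; nlinarith [mul_nonneg hΩF hq4.le]
    refine ⟨max (max ((-(b * (1 + q1)) + VL * Real.sin b) / (d + q3))
        ((-VF + b * q2 + VL) / q4)) (-ΩF),
      max (max ((b * (1 + q1) + VL * Real.sin b) / (d + q3)) ΩL)
        (max ((-VF - b * q2 + VL) / q4) (-ΩF)), ?_, ?_, ?_, ?_, ?_, ?_, ?_, ?_, ?_, ?_, ?_, ?_⟩
    · exact le_max_of_le_left (le_max_left _ _)
    · exact le_max_of_le_left (le_max_left _ _)
    · exact le_max_of_le_left (le_max_right _ _)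
    · exact le_max_of_le_left (le_max_right _ _)
    · exact le_max_of_le_right (le_max_left _ _)
    · exact le_max_right _ _
    · exact le_max_of_le_right (le_max_right _ _)
    · exact max_le (max_le pa2b1 pa4b1) (by linarith)
    · exact max_le (max_le pa1b2 pa3b2) (max_le pa5b2 pa7b2)
    · exact max_le (max_le pa2b3 pa4b3) pa6b3
    · exact max_le (max_le hc2 hLF) (max_le pa5b4 (by linarith))
    · exact max_le (max_le pa2b5 pa4b5) (by linarith)
end
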